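/- arXiv:1407.5303 — 5 statements merged into one kernel-verified Lean document; each statement's English description precedes it below -/
import Mathlib

section
/- Let n ≥ 1 and k ≥ 0 be integers, and let μ ⊆ λ be Young diagrams with |λ\μ| = kn. Then λ\μ can be covered by at most one vertical k-strip of n-ribbons: if {B_1,…,B_k} and {B'_1,…,B'_k} are two vertical k-strips of n-ribbons partitioning λ\μ, then {B_1,…,B_k} = {B'_1,…,B'_k} as sets of sets of boxes. -/
/-! Boxes are pairs `(i, j) : ℕ × ℕ` where `b.1` is the row index and `b.2` the
column index, so that the box `(x, y)` of the paper (column `x`, row `y`)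
corresponds to the pair `(y, x)`; this matches Mathlib's `YoungDiagram.cells`. -/

/-- Two boxes are edge-adjacent. -/
def Adj (a b : ℕ × ℕ) : Prop :=
  (a.1 = b.1 ∧ (a.2 + 1 = b.2 ∨ b.2 + 1 = a.2)) ∨
  (a.2 = b.2 ∧ (a.1 + 1 = b.1 ∨ b.1 + 1 = a.1))

/-- The content `x - y` of a box. -/
def content (b : ℕ × ℕ) : ℤ := (b.2 : ℤ) - (b.1 : ℤ)

/-- A finite set of boxes is edge-connected. -/
def EdgeConnected (S : Finset (ℕ × ℕ)) : Prop :=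
  ∀ a ∈ S, ∀ b ∈ S, Relation.ReflTransGen (fun p q => q ∈ S ∧ Adj p q) a b

/-- An `n`-ribbon: an edge-connected set of `n` boxes with pairwise distinct contents. -/
def IsRibbon (n : ℕ) (B : Finset (ℕ × ℕ)) : Prop :=
  B.card = n ∧ EdgeConnected B ∧ ∀ a ∈ B, ∀ b ∈ B, content a = content b → a = b

/-- `B₁` is next to `B₂`: they share at least one edge, and the first shared edge in
northwest-to-southeast order (i.e. the one minimizing the anti-diagonal parameter
`min (content a) (content b)`) is vertical, i.e. joins two horizontally adjacent
boxes (boxes in the same row). -/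
def NextTo (B₁ B₂ : Finset (ℕ × ℕ)) : Prop :=
  ∃ a ∈ B₁, ∃ b ∈ B₂, Adj a b ∧ a.1 = b.1 ∧
    ∀ a' ∈ B₁, ∀ b' ∈ B₂, Adj a' b' →
      min (content a) (content b) ≤ min (content a') (content b')

/-- `S` is a vertical `k`-strip of `n`-ribbons covering `D`: a partition of `D` into
`k` pairwise disjoint `n`-ribbons, no one of which is next to another. -/
def IsVerticalStrip (n k : ℕ) (D : Finset (ℕ × ℕ)) (S : Finset (Finset (ℕ × ℕ))) : Prop :=
  S.card = k ∧ (∀ B ∈ S, IsRibbon n B) ∧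
    (∀ B ∈ S, ∀ B' ∈ S, B ≠ B' → Disjoint B B') ∧
    S.sup id = D ∧
    (∀ B ∈ S, ∀ B' ∈ S, B ≠ B' → ¬ NextTo B B')

namespace StripUnique

open Relation

lemma adj_content {a b : ℕ × ℕ} (h : Adj a b) :
    content b = content a + 1 ∨ content a = content b + 1 := by
  rcases h with ⟨h1, h2 | h2⟩ | ⟨h1, h2 | h2⟩ <;> simp only [content] <;> omega

lemma mem_of_path {B : Finset (ℕ × ℕ)} {a b : ℕ × ℕ} (ha : a ∈ B)
    (h : ReflTransGen (fun p q => q ∈ B ∧ Adj p q) a b) : b ∈ B := by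
  induction h with
  | refl => exact ha
  | tail _ h2 _ => exact h2.1

lemma cross {B : Finset (ℕ × ℕ)} {a b : ℕ × ℕ} (ha : a ∈ B)
    (h : ReflTransGen (fun p q => q ∈ B ∧ Adj p q) a b) :
    ∀ c : ℤ, content a ≤ c → c < content b →
    ∃ p ∈ B, ∃ q ∈ B, Adj p q ∧ content p = c ∧ content q = c + 1 := by
  induction h with
  | refl => intro c h1 h2; omega
  | @tail b' b'' h1 h2 ih =>
    intro c hc1 hc2
    by_cases hb : c < content b'
    · exact ih c hc1 hb
    · push_neg at hb
      rcases adj_content h2.2 with he | he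
      · exact ⟨b', mem_of_path ha h1, b'', h2.1, h2.2, by omega, by omega⟩
      · omega

lemma ribbon_interval {n : ℕ} {B : Finset (ℕ × ℕ)} (hB : IsRibbon n B) {x y : ℕ × ℕ}
    (hx : x ∈ B) (hy : y ∈ B) {c : ℤ} (h1 : content x ≤ c) (h2 : c ≤ content y) :
    ∃ z ∈ B, content z = c := by
  rcases eq_or_lt_of_le h2 with h | h
  · exact ⟨y, hy, h.symm⟩
  · obtain ⟨p, hp, q, hq, _, hcp, _⟩ := cross hx (hB.2.1 x hx y hy) c h1 h
    exact ⟨p, hp, hcp⟩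

lemma ribbon_adj {n : ℕ} {B : Finset (ℕ × ℕ)} (hB : IsRibbon n B) {x y : ℕ × ℕ}
    (hx : x ∈ B) (hy : y ∈ B) (h : content y = content x + 1) : Adj x y := by
  obtain ⟨p, hp, q, hq, hadj, hcp, hcq⟩ :=
    cross hx (hB.2.1 x hx y hy) (content x) le_rfl (by omega)
  have hpx : p = x := hB.2.2 p hp x hx (by omega)
  have hqy : q = y := hB.2.2 q hq y hy (by omega)
  rw [hpx, hqy] at hadj; exact hadj

lemma ribbon_step {n : ℕ} {B : Finset (ℕ × ℕ)} (hB : IsRibbon n B) {x y : ℕ × ℕ}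
    (hx : x ∈ B) (hy : y ∈ B) (h : content y = content x + 1) :
    (y.1 = x.1 ∧ y.2 = x.2 + 1) ∨ (y.2 = x.2 ∧ y.1 + 1 = x.1) := by
  have hadj := ribbon_adj hB hx hy h
  simp only [content] at h
  rcases hadj with ⟨h1, h2 | h2⟩ | ⟨h1, h2 | h2⟩ <;> omega

/-- successor relation in a decomposition -/
def Succ (S : Finset (Finset (ℕ × ℕ))) (x y : ℕ × ℕ) : Prop :=
  ∃ B ∈ S, x ∈ B ∧ y ∈ B ∧ content y = content x + 1

variable {n k : ℕ} {D : Finset (ℕ × ℕ)} {S S' : Finset (Finset (ℕ × ℕ))}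

lemma ribbon_unique (hS : IsVerticalStrip n k D S) {B B' : Finset (ℕ × ℕ)}
    (hB : B ∈ S) (hB' : B' ∈ S) {x : ℕ × ℕ} (hx : x ∈ B) (hx' : x ∈ B') : B = B' := by
  by_contra h
  exact Finset.disjoint_left.mp (hS.2.2.1 B hB B' hB' h) hx hx'

lemma sub_D (hS : IsVerticalStrip n k D S) {B : Finset (ℕ × ℕ)} (hB : B ∈ S) : B ⊆ D := by
  have : id B ≤ S.sup id := Finset.le_sup hB
  rwa [hS.2.2.2.1] at this

lemma mem_D (hS : IsVerticalStrip n k D S) {x : ℕ × ℕ} (hx : x ∈ D) :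
    ∃ B ∈ S, x ∈ B := by
  rw [← hS.2.2.2.1] at hx
  simpa using (Finset.mem_sup.mp hx)

lemma succ_inj (hS : IsVerticalStrip n k D S) {x x' y : ℕ × ℕ}
    (h1 : Succ S x y) (h2 : Succ S x' y) : x = x' := by
  obtain ⟨B, hB, hx, hy, hc⟩ := h1
  obtain ⟨B', hB', hx', hy', hc'⟩ := h2
  have hBB := ribbon_unique hS hB hB' hy hy'
  subst hBB
  exact (hS.2.1 B hB).2.2 x hx x' hx' (by omega)

/-- Case "head in one but not the other": cardinality contradiction. -/
lemma head_case (hS : IsVerticalStrip n k D S) (hS' : IsVerticalStrip n k D S')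
    {x y : ℕ × ℕ}
    (hbelow : ∀ z ∈ D, content z < content x → ∀ w, Succ S z w ↔ Succ S' z w)
    (hy : Succ S x y) (hnot : ∀ y', ¬ Succ S' x y') : False := by
  obtain ⟨B₁, hB₁, hxB₁, hyB₁, hcy⟩ := hy
  have hxD : x ∈ D := sub_D hS hB₁ hxB₁
  obtain ⟨B₁', hB₁', hxB₁'⟩ := mem_D hS' hxD
  have hrib : IsRibbon n B₁ := hS.2.1 B₁ hB₁
  have hrib' : IsRibbon n B₁' := hS'.2.1 B₁' hB₁'
  -- the two ribbons agree below content x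
  have C : ∀ j : ℕ, ∀ z, content z = content x - j → (z ∈ B₁ ↔ z ∈ B₁') := by
    intro j
    induction j with
    | zero =>
      intro z hz
      constructor
      · intro hzB
        have : z = x := hrib.2.2 z hzB x hxB₁ (by omega)
        rw [this]; exact hxB₁'
      · intro hzB
        have : z = x := hrib'.2.2 z hzB x hxB₁' (by omega)
        rw [this]; exact hxB₁
    | succ j ih =>
      intro z hz
      constructor
      · intro hzB
        obtain ⟨u, huB, hcu⟩ := ribbon_interval hrib hzB hxB₁
          (c := content x - j) (by omega) (by omega)
        have hsucc : Succ S z u := ⟨B₁, hB₁, hzB, huB, by omega⟩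
        have hzD : z ∈ D := sub_D hS hB₁ hzB
        have hsucc' : Succ S' z u := (hbelow z hzD (by omega) u).mp hsucc
        obtain ⟨B'', hB'', hzB'', huB'', _⟩ := hsucc'
        have huB₁' : u ∈ B₁' := (ih u hcu).mp huB
        have : B'' = B₁' := ribbon_unique hS' hB'' hB₁' huB'' huB₁'
        rw [← this]; exact hzB''
      · intro hzB
        obtain ⟨u, huB, hcu⟩ := ribbon_interval hrib' hzB hxB₁'
          (c := content x - j) (by omega) (by omega)
        have hsucc' : Succ S' z u := ⟨B₁', hB₁', hzB, huB, by omega⟩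
        have hzD : z ∈ D := sub_D hS' hB₁' hzB
        have hsucc : Succ S z u := (hbelow z hzD (by omega) u).mpr hsucc'
        obtain ⟨B'', hB'', hzB'', huB'', _⟩ := hsucc
        have huB₁ : u ∈ B₁ := (ih u hcu).mpr huB
        have : B'' = B₁ := ribbon_unique hS hB'' hB₁ huB'' huB₁
        rw [← this]; exact hzB''
  -- every cell of B₁' has content ≤ content x
  have hle : ∀ z ∈ B₁', content z ≤ content x := by
    intro z hz
    by_contra hgt
    push_neg at hgt
    obtain ⟨u, huB, hcu⟩ := ribbon_interval hrib' hxB₁' hz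
      (c := content x + 1) (by omega) (by omega)
    exact hnot u ⟨B₁', hB₁', hxB₁', huB, by omega⟩
  have hsub : B₁' ⊆ B₁ := by
    intro z hz
    have h1 : content z ≤ content x := hle z hz
    have h2 : ((content x - content z).toNat : ℤ) = content x - content z :=
      Int.toNat_of_nonneg (by omega)
    exact (C (content x - content z).toNat z (by omega)).mpr hz
  have heq : B₁' = B₁ :=
    Finset.eq_of_subset_of_card_le hsub (by rw [hrib.1, hrib'.1])
  exact hnot y ⟨B₁', hB₁', hxB₁', heq ▸ hyB₁, hcy⟩

/-- Case "east in `S`, north in `S'`": NextTo contradiction in `S'`. -/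
lemma flip_case (hS : IsVerticalStrip n k D S) (hS' : IsVerticalStrip n k D S')
    {x y' : ℕ × ℕ}
    (hrow : ∀ z ∈ D, content z = content x → x.1 < z.1 →
      ∀ w, Succ S z w ↔ Succ S' z w)
    (he : Succ S x (x.1, x.2 + 1))
    (hn' : Succ S' x y') (hy'2 : y'.2 = x.2) (hy'1 : y'.1 + 1 = x.1) : False := by
  obtain ⟨B₁', hB₁', hxB₁', hy'B₁', hcy'⟩ := hn'
  have hrib₁' : IsRibbon n B₁' := hS'.2.1 B₁' hB₁'
  set e : ℕ × ℕ := (x.1, x.2 + 1) with hedef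
  have heD : e ∈ D := by
    obtain ⟨B, hB, _, heB, _⟩ := he
    exact sub_D hS hB heB
  obtain ⟨B₂', hB₂', heB₂'⟩ := mem_D hS' heD
  have hrib₂' : IsRibbon n B₂' := hS'.2.1 B₂' hB₂'
  have hce : content e = content x + 1 := by simp only [content, hedef]; omega
  have hne' : B₁' ≠ B₂' := by
    intro h
    subst h
    have : e = y' := hrib₁'.2.2 e heB₂' y' hy'B₁' (by omega)
    have : e.1 = y'.1 := by rw [this]
    simp only [hedef] at this
    omega
  -- all cells of B₂' have content ≥ content x + 1
  have hmin : ∀ z ∈ B₂', content x + 1 ≤ content z := by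
    intro z hz
    by_contra hlt
    push_neg at hlt
    obtain ⟨u, huB, hcu⟩ := ribbon_interval hrib₂' hz heB₂'
      (c := content x) (by omega) (by omega)
    have hstep := ribbon_step hrib₂' huB heB₂' (by omega)
    rcases hstep with ⟨h1, h2⟩ | ⟨h1, h2⟩
    · -- u = x, contradiction with disjointness
      have hux : u = x := by
        have : e.1 = x.1 ∧ e.2 = x.2 + 1 := by simp [hedef]
        exact Prod.ext (by omega) (by omega)
      rw [hux] at huB
      exact hne' (ribbon_unique hS' hB₁' hB₂' hxB₁' huB)
    · -- u = se, use the row hypothesis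
      have huD : u ∈ D := sub_D hS' hB₂' huB
      have hu1 : x.1 < u.1 := by
        have : e.1 = x.1 := by simp [hedef]
        omega
      have hsucc' : Succ S' u e := ⟨B₂', hB₂', huB, heB₂', by omega⟩
      have hsucc : Succ S u e := (hrow u huD (by omega) hu1 e).mpr hsucc'
      have hux : u = x := succ_inj hS hsucc he
      rw [hux] at hu1
      omega
  -- NextTo B₁' B₂'
  have hnext : NextTo B₁' B₂' := by
    refine ⟨x, hxB₁', e, heB₂', Or.inl ⟨rfl, Or.inl rfl⟩, rfl, ?_⟩
    intro a' ha' b' hb' hadj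
    have h1 : min (content x) (content e) = content x := min_eq_left (by omega)
    rw [h1]
    have h2 : content x + 1 ≤ content b' := hmin b' hb'
    rcases adj_content hadj with h | h
    · exact le_min (by omega) (by omega)
    · exact le_min (by omega) (by omega)
  exact hS'.2.2.2.2 B₁' hB₁' B₂' hB₂' hne' hnext

lemma agree_all (hS : IsVerticalStrip n k D S) (hS' : IsVerticalStrip n k D S') :
    ∀ x ∈ D, ∀ y, Succ S x y ↔ Succ S' x y := by
  classical
  by_contra hcon
  push_neg at hcon
  set Δ := D.filter (fun x => ¬ ∀ y, Succ S x y ↔ Succ S' x y) with hΔdef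
  have hne : Δ.Nonempty := by
    obtain ⟨x, hxD, y, hy⟩ := hcon
    refine ⟨x, Finset.mem_filter.mpr ⟨hxD, fun h => ?_⟩⟩
    rcases hy with ⟨a, b⟩ | ⟨a, b⟩
    · exact b ((h y).mp a)
    · exact a ((h y).mpr b)
  obtain ⟨x₀, hx₀, hmin⟩ := Finset.exists_min_image Δ content hne
  set Δ₂ := Δ.filter (fun z => content z = content x₀) with hΔ₂def
  have hne₂ : Δ₂.Nonempty := ⟨x₀, Finset.mem_filter.mpr ⟨hx₀, rfl⟩⟩
  obtain ⟨x, hx, hmax⟩ := Finset.exists_max_image Δ₂ (fun z => z.1) hne₂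
  have hxΔ : x ∈ Δ := (Finset.mem_filter.mp hx).1
  have hcx : content x = content x₀ := (Finset.mem_filter.mp hx).2
  have hxD : x ∈ D := (Finset.mem_filter.mp hxΔ).1
  have hxdis : ¬ ∀ y, Succ S x y ↔ Succ S' x y := (Finset.mem_filter.mp hxΔ).2
  have hbelow : ∀ z ∈ D, content z < content x → ∀ w, Succ S z w ↔ Succ S' z w := by
    intro z hzD hzc w
    by_contra hw
    have hzΔ : z ∈ Δ := Finset.mem_filter.mpr ⟨hzD, fun h => hw (h w)⟩
    have := hmin z hzΔ
    omega
  have hrow : ∀ z ∈ D, content z = content x → x.1 < z.1 →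
      ∀ w, Succ S z w ↔ Succ S' z w := by
    intro z hzD hzc hz1 w
    by_contra hw
    have hzΔ : z ∈ Δ := Finset.mem_filter.mpr ⟨hzD, fun h => hw (h w)⟩
    have hzΔ₂ : z ∈ Δ₂ := Finset.mem_filter.mpr ⟨hzΔ, by omega⟩
    have := hmax z hzΔ₂
    omega
  have hrow' : ∀ z ∈ D, content z = content x → x.1 < z.1 →
      ∀ w, Succ S' z w ↔ Succ S z w :=
    fun z hz hc h1 w => (hrow z hz hc h1 w).symm
  have hbelow' : ∀ z ∈ D, content z < content x → ∀ w, Succ S' z w ↔ Succ S z w :=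
    fun z hz hc w => (hbelow z hz hc w).symm
  -- extract a disagreement
  push_neg at hxdis
  obtain ⟨y, hy⟩ := hxdis
  -- a general step: from Succ in one and Succ in the other with a different
  -- target (or no target), derive False.
  have main : ∀ (T T' : Finset (Finset (ℕ × ℕ))),
      IsVerticalStrip n k D T → IsVerticalStrip n k D T' →
      (∀ z ∈ D, content z < content x → ∀ w, Succ T z w ↔ Succ T' z w) →
      (∀ z ∈ D, content z = content x → x.1 < z.1 →
        ∀ w, Succ T z w ↔ Succ T' z w) →
      ∀ y, Succ T x y → ¬ Succ T' x y → False := by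
    intro T T' hT hT' hTb hTr y hTy hT'y
    by_cases hex : ∃ y', Succ T' x y'
    · obtain ⟨y', hy'⟩ := hex
      have hyy' : y ≠ y' := fun h => hT'y (h ▸ hy')
      -- shapes
      obtain ⟨B, hB, hxB, hyB, hcy⟩ := hTy
      obtain ⟨B', hB', hxB', hy'B', hcy'⟩ := hy'
      have hys := ribbon_step (hT.2.1 B hB) hxB hyB hcy
      have hy's := ribbon_step (hT'.2.1 B' hB') hxB' hy'B' hcy'
      rcases hys with ⟨h1, h2⟩ | ⟨h1, h2⟩
      · rcases hy's with ⟨h1', h2'⟩ | ⟨h1', h2'⟩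
        · exact hyy' (Prod.ext (by omega) (by omega))
        · -- T : east, T' : north
          have hye : y = (x.1, x.2 + 1) := Prod.ext h1 h2
          exact flip_case hT hT' hTr (hye ▸ ⟨B, hB, hxB, hyB, hcy⟩)
            ⟨B', hB', hxB', hy'B', hcy'⟩ h1' h2'
      · rcases hy's with ⟨h1', h2'⟩ | ⟨h1', h2'⟩
        · -- T : north, T' : east
          have hy'e : y' = (x.1, x.2 + 1) := Prod.ext h1' h2'
          exact flip_case hT' hT
            (fun z hz hc hr w => (hTr z hz hc hr w).symm)
            (hy'e ▸ ⟨B', hB', hxB', hy'B', hcy'⟩)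
            ⟨B, hB, hxB, hyB, hcy⟩ h1 h2
        · exact hyy' (Prod.ext (by omega) (by omega))
    · push_neg at hex
      exact head_case hT hT' hTb hTy hex
  rcases hy with ⟨h, h'⟩ | ⟨h, h'⟩
  · exact main S S' hS hS' hbelow hrow y h h'
  · exact main S' S hS' hS hbelow' hrow' y h' h

end StripUnique

/-- Lemma `lem:strip`: a skew diagram `λ \ μ` of size `k·n` can be
covered by at most one vertical `k`-strip of `n`-ribbons. -/
theorem skew_vertical_strip_unique (n k : ℕ) (hn : 1 ≤ n)
    (μ lam : YoungDiagram) (hml : μ ≤ lam)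
    (hcard : (lam.cells \ μ.cells).card = k * n)
    (S S' : Finset (Finset (ℕ × ℕ)))
    (hS : IsVerticalStrip n k (lam.cells \ μ.cells) S)
    (hS' : IsVerticalStrip n k (lam.cells \ μ.cells) S') :
    S = S' := by
  classical
  set D := lam.cells \ μ.cells with hD
  have hagree := StripUnique.agree_all hS hS'
  have key : ∀ (T T' : Finset (Finset (ℕ × ℕ))),
      IsVerticalStrip n k D T → IsVerticalStrip n k D T' →
      (∀ x ∈ D, ∀ y, StripUnique.Succ T x y ↔ StripUnique.Succ T' x y) →
      T ⊆ T' := by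
    intro T T' hT hT' hag B hB
    have hrib : IsRibbon n B := hT.2.1 B hB
    have hBne : B.Nonempty := Finset.card_pos.mp (by rw [hrib.1]; omega)
    obtain ⟨t, htB, htmin⟩ := Finset.exists_min_image B content hBne
    have htD : t ∈ D := StripUnique.sub_D hT hB htB
    obtain ⟨B', hB', htB'⟩ := StripUnique.mem_D hT' htD
    have hrib' : IsRibbon n B' := hT'.2.1 B' hB'
    have C : ∀ j : ℕ, ∀ z ∈ B, content z = content t + j → z ∈ B' := by
      intro j
      induction j with
      | zero =>
        intro z hz hc
        have : z = t := hrib.2.2 z hz t htB (by omega)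
        rw [this]; exact htB'
      | succ j ih =>
        intro z hz hc
        obtain ⟨u, huB, hcu⟩ := StripUnique.ribbon_interval hrib htB hz
          (c := content t + j) (by omega) (by omega)
        have huB' : u ∈ B' := ih u huB hcu
        have hsucc : StripUnique.Succ T u z := ⟨B, hB, huB, hz, by omega⟩
        have huD : u ∈ D := StripUnique.sub_D hT hB huB
        have hsucc' : StripUnique.Succ T' u z := (hag u huD z).mp hsucc
        obtain ⟨B'', hB'', huB'', hzB'', _⟩ := hsucc'
        have : B'' = B' := StripUnique.ribbon_unique hT' hB'' hB' huB'' huB'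
        rw [← this]; exact hzB''
    have hsub : B ⊆ B' := by
      intro z hz
      have h1 : content t ≤ content z := htmin z hz
      have h2 : ((content z - content t).toNat : ℤ) = content z - content t :=
        Int.toNat_of_nonneg (by omega)
      exact C (content z - content t).toNat z hz (by omega)
    have : B = B' := Finset.eq_of_subset_of_card_le hsub (by rw [hrib.1, hrib'.1])
    rw [this]; exact hB'
  have h1 : S ⊆ S' := key S S' hS hS' hagree
  exact Finset.eq_of_subset_of_card_le h1 (by rw [hS.1, hS'.1])
end

section
/- Let n ≥ 1 and k ≥ 1 be integers, and let D = λ\μ be a skew diagram that is covered by a vertical k-strip of n-ribbons. Let □ be the northwest-most box of D (the leftmost box in the highest row of D). Then: (1) the ribbon B of the strip containing □ is the same in every vertical k-strip of n-ribbons covering D; (2) D\B is again a skew diagram (a set-difference of two Young diagrams); and (3) D\B is covered by a vertical (k−1)-strip of n-ribbons. -/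
lemma adj_content {a b : ℕ × ℕ} (h : Adj a b) :
    content b = content a + 1 ∨ content a = content b + 1 := by
  unfold Adj at h
  unfold content
  rcases h with ⟨h1, h2 | h2⟩ | ⟨h1, h2 | h2⟩ <;> omega

lemma mem_of_path {B : Finset (ℕ × ℕ)} {a b : ℕ × ℕ} (ha : a ∈ B)
    (h : Relation.ReflTransGen (fun p q => q ∈ B ∧ Adj p q) a b) : b ∈ B := by
  induction h with
  | refl => exact ha
  | tail _ h2 _ => exact h2.1

lemma exists_content_between {B : Finset (ℕ × ℕ)} (hconn : EdgeConnected B)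
    {a b : ℕ × ℕ} (ha : a ∈ B) (hb : b ∈ B)
    {m : ℤ} (h1 : content a ≤ m) (h2 : m ≤ content b) : ∃ x ∈ B, content x = m := by
  have h := hconn a ha b hb
  clear hb
  induction h with
  | refl => exact ⟨a, ha, le_antisymm h1 h2⟩
  | @tail p q hpath hstep ih =>
    rcases adj_content hstep.2 with hc | hc
    · by_cases hm : m ≤ content p
      · exact ih hm
      · exact ⟨q, hstep.1, by omega⟩
    · exact ih (by omega)

lemma up_or_right {B : Finset (ℕ × ℕ)} (hconn : EdgeConnected B)
    (hinj : ∀ a ∈ B, ∀ b ∈ B, content a = content b → a = b)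
    {a b : ℕ × ℕ} (ha : a ∈ B) (hb : b ∈ B) (hc : content b = content a + 1) :
    (a.1 = b.1 + 1 ∧ a.2 = b.2) ∨ (a.1 = b.1 ∧ b.2 = a.2 + 1) := by
  have hadj : Adj a b := by
    have hpath := hconn a ha b hb
    have hcross : ∀ x : ℕ × ℕ, Relation.ReflTransGen (fun p q => q ∈ B ∧ Adj p q) a x →
        content a + 1 ≤ content x →
        ∃ u ∈ B, ∃ v ∈ B, Adj u v ∧ content u ≤ content a ∧ content a < content v := by
      intro x hx
      induction hx with
      | refl => intro h; omega
      | @tail p q hpath' hstep ih =>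
        intro hgt
        by_cases hcc : content a + 1 ≤ content p
        · exact ih hcc
        · exact ⟨p, mem_of_path ha hpath', q, hstep.1, hstep.2, by omega, by omega⟩
    obtain ⟨u, hu, v, hv, huv, hu1, hv1⟩ := hcross b hpath (by omega)
    rcases adj_content huv with hc' | hc'
    · have hua : u = a := hinj u hu a ha (by omega)
      have hvb : v = b := hinj v hv b hb (by omega)
      rw [hua, hvb] at huv; exact huv
    · omega
  unfold Adj at hadj
  unfold content at hc
  rcases hadj with ⟨h1, h2 | h2⟩ | ⟨h1, h2 | h2⟩
  · right; exact ⟨h1, by omega⟩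
  · omega
  · omega
  · left; exact ⟨by omega, h1⟩

lemma mem_D {μ lam : YoungDiagram} {D : Finset (ℕ × ℕ)} (hD : D = lam.cells \ μ.cells)
    {x : ℕ × ℕ} : x ∈ D ↔ (x ∈ lam ∧ x ∉ μ) := by
  subst hD
  rw [Finset.mem_sdiff]
  simp [YoungDiagram.mem_cells]

lemma bot_min {μ lam : YoungDiagram} {D : Finset (ℕ × ℕ)} (hD : D = lam.cells \ μ.cells)
    {box : ℕ × ℕ} (hbox : box ∈ D)
    (htop : ∀ b ∈ D, b.1 ≤ box.1)
    (hleft : ∀ b ∈ D, b.1 = box.1 → box.2 ≤ b.2) :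
    ∀ b ∈ D, content box ≤ content b ∧ (content b = content box → b = box) := by
  have hboxμ : (box.1, box.2) ∉ μ := by
    have := ((mem_D hD).1 hbox).2; simpa using this
  have hboxlam : (box.1, box.2) ∈ lam := by
    have := ((mem_D hD).1 hbox).1; simpa using this
  have hCle : box.2 ≤ μ.rowLen box.1 := by
    by_contra hlt
    push_neg at hlt
    have hw : ((box.1, μ.rowLen box.1) : ℕ × ℕ) ∈ D := by
      rw [mem_D hD]
      constructor
      · exact lam.up_left_mem le_rfl hlt.le hboxlam
      · rw [YoungDiagram.mem_iff_lt_rowLen]; omega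
    have := hleft _ hw rfl
    simp at this
    omega
  intro b hb
  have hi : b.1 ≤ box.1 := htop b hb
  have hj : μ.rowLen b.1 ≤ b.2 := by
    have : (b.1, b.2) ∉ μ := by
      have := ((mem_D hD).1 hb).2; simpa using this
    rw [YoungDiagram.mem_iff_lt_rowLen] at this
    omega
  have hmono : μ.rowLen box.1 ≤ μ.rowLen b.1 := μ.rowLen_anti _ _ hi
  constructor
  · unfold content; omega
  · intro hc
    unfold content at hc
    have h1 : b.1 = box.1 := by omega
    have h2 : b.2 = box.2 := by omega
    exact Prod.ext h1 h2

lemma exists_bot {D : Finset (ℕ × ℕ)} {w : ℕ × ℕ} (hw : w ∈ D) :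
    ∃ β ∈ D, content β = content w ∧ ∀ z ∈ D, content z = content w → z.1 ≤ β.1 := by
  obtain ⟨β, hβ, hmax⟩ := Finset.exists_max_image
    (D.filter (fun z => content z = content w)) Prod.fst ⟨w, by simp [hw]⟩
  rw [Finset.mem_filter] at hβ
  exact ⟨β, hβ.1, hβ.2, fun z hz hcz => hmax z (Finset.mem_filter.2 ⟨hz, hcz⟩)⟩

/-- The bottom box of diagonal `t` is up- or right- of the bottom box of diagonal `t-1`. -/
lemma diag_step {μ lam : YoungDiagram} {D : Finset (ℕ × ℕ)} (hD : D = lam.cells \ μ.cells)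
    {y β : ℕ × ℕ} (hy : y ∈ D) (hβ : β ∈ D)
    (hybot : ∀ z ∈ D, content z = content y → z.1 ≤ y.1)
    (hβbot : ∀ z ∈ D, content z = content β → z.1 ≤ β.1)
    (hc : content β = content y + 1) :
    (β.1 + 1 = y.1 ∧ β.2 = y.2) ∨ (β.1 = y.1 ∧ β.2 = y.2 + 1) := by
  have hyl := (mem_D hD).1 hy
  have hβl := (mem_D hD).1 hβ
  unfold content at hc
  -- step (a): β.1 ≤ y.1
  have ha : β.1 ≤ y.1 := by
    by_contra hgt
    push_neg at hgt
    have hβ2' : 1 ≤ β.2 := by omega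
    have hx : ((β.1, β.2 - 1) : ℕ × ℕ) ∈ D := by
      rw [mem_D hD]
      constructor
      · have h1 : β.2 - 1 ≤ β.2 := Nat.sub_le _ _
        exact lam.up_left_mem le_rfl h1 (by simpa using hβl.1)
      · intro hmem
        have h1 : y.1 ≤ β.1 := by omega
        have h2 : y.2 ≤ β.2 - 1 := by omega
        have : (y.1, y.2) ∈ μ := μ.up_left_mem h1 h2 hmem
        exact hyl.2 (by simpa using this)
    have := hybot ((β.1, β.2 - 1) : ℕ × ℕ) hx (by unfold content; dsimp only; omega)
    simp at this
    omega
  rcases eq_or_lt_of_le ha with heq | hlt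
  · right
    exact ⟨heq, by omega⟩
  · left
    have hy1 : 1 ≤ y.1 := by omega
    have hx' : ((y.1 - 1, y.2) : ℕ × ℕ) ∈ D := by
      rw [mem_D hD]
      constructor
      · have h1 : y.1 - 1 ≤ y.1 := Nat.sub_le _ _
        exact lam.up_left_mem h1 le_rfl (by simpa using hyl.1)
      · intro hmem
        have h1 : β.1 ≤ y.1 - 1 := by omega
        have h2 : β.2 ≤ y.2 := by omega
        have : (β.1, β.2) ∈ μ := μ.up_left_mem h1 h2 hmem
        exact hβl.2 (by simpa using this)
    have := hβbot ((y.1 - 1, y.2) : ℕ × ℕ) hx' (by unfold content; dsimp only; omega)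
    simp at this
    omega

lemma subset_of_strip {n k : ℕ} {D : Finset (ℕ × ℕ)} {S : Finset (Finset (ℕ × ℕ))}
    (hS : IsVerticalStrip n k D S) {B : Finset (ℕ × ℕ)} (hB : B ∈ S) :
    ∀ x ∈ B, x ∈ D := by
  intro x hx
  rw [← hS.2.2.2.1]
  exact Finset.mem_sup.2 ⟨B, hB, hx⟩

lemma char_mem (n k : ℕ) (hn : 1 ≤ n)
    (μ lam : YoungDiagram)
    (D : Finset (ℕ × ℕ)) (hD : D = lam.cells \ μ.cells)
    (box : ℕ × ℕ) (hbox : box ∈ D)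
    (htop : ∀ b ∈ D, b.1 ≤ box.1)
    (hleft : ∀ b ∈ D, b.1 = box.1 → box.2 ≤ b.2)
    (S : Finset (Finset (ℕ × ℕ))) (hS : IsVerticalStrip n k D S)
    (B : Finset (ℕ × ℕ)) (hB : B ∈ S) (hboxB : box ∈ B) :
    ∀ x, x ∈ B ↔ (x ∈ D ∧ content x ≤ content box + n - 1 ∧
      ∀ z ∈ D, content z = content x → z.1 ≤ x.1) := by
  obtain ⟨hcard, hrib, hdisj, hsup, hnext⟩ := hS
  have hBD : ∀ x ∈ B, x ∈ D := fun x hx => by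
    rw [← hsup]; exact Finset.mem_sup.2 ⟨B, hB, hx⟩
  obtain ⟨hcardB, connB, injB⟩ := hrib B hB
  have hmin := bot_min hD hbox htop hleft
  -- forward: content upper bound
  have hcontub : ∀ x ∈ B, content x ≤ content box + n - 1 := by
    intro x hx
    have hcx : content box ≤ content x := (hmin x (hBD x hx)).1
    have hsub : Finset.Icc (content box) (content x) ⊆ B.image content := by
      intro m hm
      rw [Finset.mem_Icc] at hm
      obtain ⟨y, hy, hym⟩ := exists_content_between connB hboxB hx hm.1 hm.2
      exact Finset.mem_image.2 ⟨y, hy, hym⟩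
    have h1 := Finset.card_le_card hsub
    rw [Int.card_Icc] at h1
    have h2 : (B.image content).card ≤ B.card := Finset.card_image_le
    omega
  -- forward: bottom of diagonal
  have hbotB : ∀ m : ℕ, ∀ x ∈ B, content x = content box + m →
      ∀ z ∈ D, content z = content x → z.1 ≤ x.1 := by
    intro m
    induction m using Nat.strong_induction_on with
    | _ m ih =>
    intro x hx hcx z hz hcz
    rcases Nat.eq_zero_or_pos m with hm | hm
    · have hxbox : x = box := (hmin x (hBD x hx)).2 (by omega)
      have hzbox : z = box := (hmin z hz).2 (by rw [hcz]; omega)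
      rw [hxbox, hzbox]
    · obtain ⟨y, hy, hcy⟩ := exists_content_between connB hboxB hx
        (by omega : content box ≤ content box + (m - 1 : ℕ))
        (by omega : (content box + (m - 1 : ℕ) : ℤ) ≤ content x)
      have hyD := hBD y hy
      have hybot : ∀ z' ∈ D, content z' = content y → z'.1 ≤ y.1 := by
        intro z' hz' hcz'
        exact ih (m - 1) (by omega) y hy hcy z' hz' (by rw [hcz', hcy])
      obtain ⟨β, hβD, hcβ, hβbot⟩ := exists_bot (hBD x hx)
      by_cases hxβ : x = β
      · rw [hxβ]; exact hβbot z hz hcz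
      exfalso
      have hcyx : content x = content y + 1 := by rw [hcx, hcy]; push_cast; omega
      have hstepx := up_or_right connB injB hy hx hcyx
      have hstepβ := diag_step hD hyD hβD hybot
        (fun z' hz' hc' => hβbot z' hz' (by rw [hc', hcβ])) (by rw [hcβ, hcyx])
      rcases hstepx with ⟨hx1, hx2⟩ | ⟨hx1, hx2⟩
      · -- x is up of y
        rcases hstepβ with ⟨hβ1, hβ2⟩ | ⟨hβ1, hβ2⟩
        · -- β also up of y : x = β
          exact hxβ (Prod.ext (by omega) (by omega))
        · -- β right of y : the NextTo contradiction
          obtain ⟨B', hB', hβB'⟩ := Finset.mem_sup.1 (by rw [hsup]; exact hβD)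
          have hne : B ≠ B' := by
            rintro rfl
            exact hxβ (injB x hx β hβB' (by rw [hcβ]))
          obtain ⟨cardB', connB', injB'⟩ := hrib B' hB'
          have hB'D : ∀ u ∈ B', u ∈ D := fun u hu => by
            rw [← hsup]; exact Finset.mem_sup.2 ⟨B', hB', hu⟩
          have hB'lb : ∀ u ∈ B', content y + 1 ≤ content u := by
            intro u hu
            by_contra hlt
            push_neg at hlt
            obtain ⟨zz, hzz, hczz⟩ := exists_content_between (m := content y) connB' hu hβB'
              (by omega) (by rw [hcβ, hcyx]; omega)
            -- content zz = content y
            have hstepz := up_or_right connB' injB' hzz hβB' (by rw [hcβ, hcyx, hczz])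
            rcases hstepz with ⟨hz1, hz2⟩ | ⟨hz1, hz2⟩
            · -- zz below β : contradicts y bottom
              have := hybot zz (hB'D zz hzz) hczz
              omega
            · -- zz = y : contradicts disjointness
              have hzzy : zz = y := Prod.ext (by omega) (by omega)
              exact (Finset.disjoint_left.1 (hdisj B hB B' hB' hne)) hy (hzzy ▸ hzz)
          refine hnext B hB B' hB' hne ⟨y, hy, β, hβB', ?_, by omega, ?_⟩
          · exact Or.inl ⟨by omega, Or.inl (by omega)⟩
          · intro a' ha' b' hb' hadj
            have h1 := hB'lb b' hb'
            have h2 := adj_content hadj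
            have hmy : min (content y) (content β) = content y :=
              min_eq_left (by rw [hcβ, hcyx]; omega)
            rw [hmy]
            exact le_min (by omega) (by omega)
      · -- x right of y
        rcases hstepβ with ⟨hβ1, hβ2⟩ | ⟨hβ1, hβ2⟩
        · -- β up of y, but x ∈ D on the same diagonal with x.1 = y.1 > β.1
          have := hβbot x (hBD x hx) rfl
          omega
        · exact hxβ (Prod.ext (by omega) (by omega))
  -- assemble the iff
  intro x
  constructor
  · intro hx
    refine ⟨hBD x hx, hcontub x hx, ?_⟩
    have hcx : content box ≤ content x := (hmin x (hBD x hx)).1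
    exact hbotB (content x - content box).toNat x hx (by omega)
  · rintro ⟨hxD, hxub, hxbot⟩
    have hcx : content box ≤ content x := (hmin x hxD).1
    have himg : B.image content = Finset.Icc (content box) (content box + n - 1) := by
      apply Finset.eq_of_subset_of_card_le
      · intro m hm
        obtain ⟨y, hy, rfl⟩ := Finset.mem_image.1 hm
        exact Finset.mem_Icc.2 ⟨(hmin y (hBD y hy)).1, hcontub y hy⟩
      · rw [Int.card_Icc]
        have hic : (B.image content).card = B.card :=
          Finset.card_image_of_injOn (fun a ha b hb h =>
            injB a (by simpa using ha) b (by simpa using hb) h)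
        omega
    have hmem : content x ∈ B.image content := by
      rw [himg]; exact Finset.mem_Icc.2 ⟨hcx, hxub⟩
    obtain ⟨y, hy, hcy⟩ := Finset.mem_image.1 hmem
    have hybot := hbotB (content y - content box).toNat y hy (by
      have := (hmin y (hBD y hy)).1; omega)
    have h1 : y.1 ≤ x.1 := hxbot y (hBD y hy) hcy
    have h2 : x.1 ≤ y.1 := hybot x hxD hcy.symm
    have : y = x := by
      have := hcy
      unfold content at this
      exact Prod.ext (by omega) (by omega)
    rw [← this]; exact hy

section KeyLemmas

variable (n k : ℕ)
    (μ lam : YoungDiagram)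
    (D : Finset (ℕ × ℕ)) (hD : D = lam.cells \ μ.cells)
    (box : ℕ × ℕ) (hbox : box ∈ D)
    (htop : ∀ b ∈ D, b.1 ≤ box.1)
    (hleft : ∀ b ∈ D, b.1 = box.1 → box.2 ≤ b.2)
    (S : Finset (Finset (ℕ × ℕ))) (hS : IsVerticalStrip n k D S)
    (B : Finset (ℕ × ℕ)) (hB : B ∈ S)
    (hchar : ∀ x, x ∈ B ↔ (x ∈ D ∧ content x ≤ content box + n - 1 ∧
      ∀ z ∈ D, content z = content x → z.1 ≤ x.1))

include hD hbox htop hleft hS hB hchar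

/-- If the box to the right of a box of `B` is in `D`, it is in `B`. -/
lemma right_mem : ∀ y ∈ B, ∀ w ∈ D, w.1 = y.1 → w.2 = y.2 + 1 → w ∈ B := by
  intro y hy w hw hw1 hw2
  obtain ⟨hyD, hyub, hybot⟩ := (hchar y).1 hy
  have hcw : content w = content y + 1 := by unfold content; omega
  by_cases hub : content w ≤ content box + n - 1
  · -- the bottom of the next diagonal must be w itself
    obtain ⟨β, hβD, hcβ, hβbot⟩ := exists_bot hw
    have hstepβ := diag_step hD hyD hβD hybot
      (fun z' hz' hc' => hβbot z' hz' (by rw [hc', hcβ])) (by rw [hcβ, hcw])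
    rcases hstepβ with ⟨hβ1, hβ2⟩ | ⟨hβ1, hβ2⟩
    · -- β up of y: impossible since w ∈ D has w.1 = y.1 > β.1
      have := hβbot w hw rfl
      omega
    · -- β right of y, so β = w
      have hβw : β = w := Prod.ext (by omega) (by omega)
      exact (hchar w).2 ⟨hw, hub, fun z hz hc => by
        rw [← hβw]; exact hβbot z hz hc⟩
  · -- w has content `c+n`: contradiction with the vertical strip condition
    exfalso
    have hmin := bot_min hD hbox htop hleft
    have hwB : w ∉ B := fun hwB => hub ((hchar w).1 hwB).2.1
    obtain ⟨hcard, hrib, hdisj, hsup, hnext⟩ := hS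
    obtain ⟨B', hB', hwB'⟩ := Finset.mem_sup.1 (by rw [hsup]; exact hw)
    have hne : B ≠ B' := fun h => hwB (h ▸ hwB')
    obtain ⟨cardB', connB', injB'⟩ := hrib B' hB'
    have hB'D : ∀ u ∈ B', u ∈ D := fun u hu => by
      rw [← hsup]; exact Finset.mem_sup.2 ⟨B', hB', hu⟩
    have hB'lb : ∀ u ∈ B', content y + 1 ≤ content u := by
      intro u hu
      by_contra hlt
      push_neg at hlt
      obtain ⟨zz, hzz, hczz⟩ := exists_content_between (m := content y) connB' hu hwB'
        (by omega) (by omega)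
      have hstepz := up_or_right connB' injB' hzz hwB' (by omega)
      rcases hstepz with ⟨hz1, hz2⟩ | ⟨hz1, hz2⟩
      · -- zz below w : contradicts y bottom
        have := hybot zz (hB'D zz hzz) hczz
        omega
      · -- zz = y : contradicts disjointness
        have hzzy : zz = y := Prod.ext (by omega) (by omega)
        exact (Finset.disjoint_left.1 (hdisj B hB B' hB' hne)) hy (hzzy ▸ hzz)
    refine hnext B hB B' hB' hne ⟨y, hy, w, hwB', ?_, by omega, ?_⟩
    · exact Or.inl ⟨by omega, Or.inl (by omega)⟩
    · intro a' ha' b' hb' hadj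
      have h1 := hB'lb b' hb'
      have h2 := adj_content hadj
      have hmy : min (content y) (content w) = content y := min_eq_left (by omega)
      rw [hmy]
      exact le_min (by omega) (by omega)

/-- If the box below a box of `B` is in `D`, it is in `B`. -/
lemma down_mem : ∀ y ∈ B, ∀ w ∈ D, w.1 = y.1 + 1 → w.2 = y.2 → w ∈ B := by
  intro y hy w hw hw1 hw2
  obtain ⟨hyD, hyub, hybot⟩ := (hchar y).1 hy
  have hmin := bot_min hD hbox htop hleft
  have hcw : content w = content y - 1 := by unfold content; omega
  have hcy : content box < content y := by
    rcases lt_or_eq_of_le ((hmin y hyD).1) with h | h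
    · exact h
    · exfalso
      have hyb : y = box := (hmin y hyD).2 h.symm
      have := (hmin w hw).1
      omega
  obtain ⟨β, hβD, hcβ, hβbot⟩ := exists_bot hw
  have hstepβ := diag_step hD hβD hyD
    (fun z' hz' hc' => hβbot z' hz' (by rw [hc', hcβ]))
    hybot (by omega)
  have hwβ : w.1 ≤ β.1 := hβbot w hw rfl
  rcases hstepβ with ⟨hβ1, hβ2⟩ | ⟨hβ1, hβ2⟩
  · -- y up of β, so β = w
    have hβw : β = w := Prod.ext (by omega) (by omega)
    refine (hchar w).2 ⟨hw, by omega, fun z hz hc => by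
      rw [← hβw]; exact hβbot z hz hc⟩
  · -- y right of β: impossible, w.1 = y.1 + 1 > y.1 = β.1
    omega

/-- Everything in `D` weakly below-right of a box of `B` is in `B`. -/
lemma key_lemma : ∀ x ∈ B, ∀ z ∈ D, x.1 ≤ z.1 → x.2 ≤ z.2 → z ∈ B := by
  have hR := right_mem n k μ lam D hD box hbox htop hleft S hS B hB hchar
  have hDn := down_mem n k μ lam D hD box hbox htop hleft S hS B hB hchar
  intro x hx
  suffices H : ∀ g : ℕ, ∀ z ∈ D, x.1 ≤ z.1 → x.2 ≤ z.2 →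
      (z.1 - x.1) + (z.2 - x.2) = g → z ∈ B by
    intro z hz h1 h2
    exact H _ z hz h1 h2 rfl
  have hxD := subset_of_strip hS hB x hx
  have hxl := (mem_D hD).1 hxD
  intro g
  induction g with
  | zero =>
    intro z hz h1 h2 hg
    have : z = x := Prod.ext (by omega) (by omega)
    exact this ▸ hx
  | succ g ih =>
    intro z hz h1 h2 hg
    have hzl := (mem_D hD).1 hz
    by_cases hcol : x.2 < z.2
    · have hz2 : ((z.1, z.2 - 1) : ℕ × ℕ) ∈ D := by
        rw [mem_D hD]
        constructor
        · have hle : z.2 - 1 ≤ z.2 := Nat.sub_le _ _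
          exact lam.up_left_mem le_rfl hle (by simpa using hzl.1)
        · intro hmem
          have ha1 : x.1 ≤ z.1 := h1
          have ha2 : x.2 ≤ z.2 - 1 := by omega
          have : (x.1, x.2) ∈ μ := μ.up_left_mem ha1 ha2 hmem
          exact hxl.2 (by simpa using this)
      have hz2B : ((z.1, z.2 - 1) : ℕ × ℕ) ∈ B := ih _ hz2 h1 (by omega) (by omega)
      exact hR _ hz2B z hz rfl (by omega)
    · have hrow : x.1 < z.1 := by omega
      have hz3 : ((z.1 - 1, z.2) : ℕ × ℕ) ∈ D := by
        rw [mem_D hD]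
        constructor
        · have hle : z.1 - 1 ≤ z.1 := Nat.sub_le _ _
          exact lam.up_left_mem hle le_rfl (by simpa using hzl.1)
        · intro hmem
          have ha1 : x.1 ≤ z.1 - 1 := by omega
          have ha2 : x.2 ≤ z.2 := h2
          have : (x.1, x.2) ∈ μ := μ.up_left_mem ha1 ha2 hmem
          exact hxl.2 (by simpa using this)
      have hz3B : ((z.1 - 1, z.2) : ℕ × ℕ) ∈ B := ih _ hz3 (by omega) (by omega) (by omega)
      exact hDn _ hz3B z hz (by omega) rfl

end KeyLemmas

/-- if the skew diagram `D = λ \ μ` is covered by a vertical `k`-strip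
of `n`-ribbons and `box` is its northwest-most box (leftmost box in the highest row,
i.e. maximal row index, then minimal column), then the ribbon `B` of the strip
containing `box` is the same in every such strip, `D \ B` is again a skew diagram,
and `D \ B` is covered by a vertical `(k-1)`-strip of `n`-ribbons. -/
theorem outer_ribbon_unique (n k : ℕ) (hn : 1 ≤ n) (hk : 1 ≤ k)
    (μ lam : YoungDiagram) (hml : μ ≤ lam)
    (D : Finset (ℕ × ℕ)) (hD : D = lam.cells \ μ.cells)
    (box : ℕ × ℕ) (hbox : box ∈ D)
    (htop : ∀ b ∈ D, b.1 ≤ box.1)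
    (hleft : ∀ b ∈ D, b.1 = box.1 → box.2 ≤ b.2)
    (S : Finset (Finset (ℕ × ℕ))) (hS : IsVerticalStrip n k D S)
    (B : Finset (ℕ × ℕ)) (hB : B ∈ S) (hboxB : box ∈ B) :
    (∀ S' : Finset (Finset (ℕ × ℕ)), IsVerticalStrip n k D S' →
        ∀ B' ∈ S', box ∈ B' → B' = B) ∧
    (∃ lam' μ' : YoungDiagram, μ' ≤ lam' ∧ D \ B = lam'.cells \ μ'.cells) ∧
    (∃ S'' : Finset (Finset (ℕ × ℕ)), IsVerticalStrip n (k - 1) (D \ B) S'') := by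
  have hchar := char_mem n k hn μ lam D hD box hbox htop hleft S hS B hB hboxB
  refine ⟨?_, ?_, ?_⟩
  · -- Part 1: uniqueness
    intro S' hS' B' hB' hboxB'
    have hchar' := char_mem n k hn μ lam D hD box hbox htop hleft S' hS' B' hB' hboxB'
    ext x
    rw [hchar' x, hchar x]
  · -- Part 2: D \ B is a skew diagram
    have hkey := key_lemma n k μ lam D hD box hbox htop hleft S hS B hB hchar
    have hDμ : ∀ x ∈ D, x ∉ μ.cells := by
      intro x hx
      rw [hD, Finset.mem_sdiff] at hx
      exact hx.2
    have hlow : IsLowerSet ((μ.cells ∪ (D \ B) : Finset (ℕ × ℕ)) : Set (ℕ × ℕ)) := by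
      intro x y hyx hx
      simp only [Finset.coe_union, Set.mem_union, Finset.mem_coe, Finset.mem_union] at hx ⊢
      rcases hx with hx | hx
      · exact Or.inl (μ.isLowerSet hyx hx)
      · rw [Finset.mem_sdiff] at hx
        by_cases hyμ : y ∈ μ.cells
        · exact Or.inl hyμ
        · right
          rw [Finset.mem_sdiff]
          have hyD : y ∈ D := by
            rw [hD, Finset.mem_sdiff]
            have hxlam : x ∈ lam := by
              have := hx.1; rw [hD, Finset.mem_sdiff] at this
              exact (YoungDiagram.mem_cells _).1 this.1
            refine ⟨(YoungDiagram.mem_cells _).2 (lam.isLowerSet hyx hxlam), hyμ⟩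
          exact ⟨hyD, fun hyB => hx.2 (hkey y hyB x hx.1 hyx.1 hyx.2)⟩
    refine ⟨⟨μ.cells ∪ (D \ B), hlow⟩, μ, ?_, ?_⟩
    · rw [← YoungDiagram.cells_subset_iff]
      exact Finset.subset_union_left
    · show D \ B = (μ.cells ∪ (D \ B)) \ μ.cells
      ext a
      simp only [Finset.mem_sdiff, Finset.mem_union]
      constructor
      · intro ha
        exact ⟨Or.inr ha, hDμ a ha.1⟩
      · rintro ⟨h1 | h1, h2⟩
        · exact absurd h1 h2
        · exact h1
  · -- Part 3: the strip minus B
    obtain ⟨hcard, hrib, hdisj, hsup, hnext⟩ := hS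
    refine ⟨S.erase B, ?_, ?_, ?_, ?_, ?_⟩
    · rw [Finset.card_erase_of_mem hB, hcard]
    · exact fun C hC => hrib C (Finset.mem_of_mem_erase hC)
    · exact fun C hC C' hC' hne =>
        hdisj C (Finset.mem_of_mem_erase hC) C' (Finset.mem_of_mem_erase hC') hne
    · ext x
      rw [Finset.mem_sup, Finset.mem_sdiff]
      constructor
      · rintro ⟨C, hC, hxC⟩
        have hCS := Finset.mem_of_mem_erase hC
        have hCB : C ≠ B := Finset.ne_of_mem_erase hC
        refine ⟨by rw [← hsup]; exact Finset.mem_sup.2 ⟨C, hCS, hxC⟩, ?_⟩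
        intro hxB
        exact (Finset.disjoint_left.1 (hdisj C hCS B hB hCB)) hxC hxB
      · rintro ⟨hxD, hxB⟩
        obtain ⟨C, hC, hxC⟩ := Finset.mem_sup.1 (by rw [hsup]; exact hxD)
        have hCB : C ≠ B := fun h => hxB (h ▸ hxC)
        exact ⟨C, Finset.mem_erase.2 ⟨hCB, hC⟩, hxC⟩
    · exact fun C hC C' hC' hne =>
        hnext C (Finset.mem_of_mem_erase hC) C' (Finset.mem_of_mem_erase hC') hne
end

section
/- Let n ≥ 1 and let μ ⊆ λ be Young diagrams. Any two n-ribbon tableaux T, T' of shape λ\μ satisfy ht(T) ≡ ht(T') (mod 2). -/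
/-- The height of a ribbon: the number of rows it meets, minus 1. -/
def ribbonHt (B : Finset (ℕ × ℕ)) : ℕ := (B.image Prod.fst).card - 1

/-- An `n`-ribbon tableau of shape `λ \ μ`: a chain of Young diagrams
`μ = ν₀ ⊆ ν₁ ⊆ ⋯ ⊆ ν_d = λ` in which each difference is an `n`-ribbon. -/
structure RibbonTableau (n : ℕ) (μ lam : YoungDiagram) where
  len : ℕ
  chain : ℕ → YoungDiagram
  first : chain 0 = μ
  last : chain len = lam
  mono : ∀ i < len, (chain i).cells ⊆ (chain (i + 1)).cells
  ribbon : ∀ i < len, IsRibbon n ((chain (i + 1)).cells \ (chain i).cells)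

/-- The height of a ribbon tableau: the sum of the heights of its ribbons. -/
def RibbonTableau.ht {n : ℕ} {μ lam : YoungDiagram} (T : RibbonTableau n μ lam) : ℕ :=
  ∑ i ∈ Finset.range T.len, ribbonHt ((T.chain (i + 1)).cells \ (T.chain i).cells)

/-- The underlying tiling of a ribbon tableau: the set of its ribbons. -/
def RibbonTableau.tiling {n : ℕ} {μ lam : YoungDiagram} (T : RibbonTableau n μ lam) :
    Finset (Finset (ℕ × ℕ)) :=
  (Finset.range T.len).image fun i => (T.chain (i + 1)).cells \ (T.chain i).cells

namespace RibbonParity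

/-! ### The pairwise `ZMod 2` invariant of a finite set of integers -/

/-- `⌊x₊/n⌋` as an element of `ZMod 2`. -/
def f (n : ℕ) (x : ℤ) : ZMod 2 := ((x.toNat / n : ℕ) : ZMod 2)

/-- Symmetric pair weight. -/
def F (n : ℕ) (x t : ℤ) : ZMod 2 :=
  if x < t then f n (t - x) else if t < x then f n (x - t) else 0

def phi (n : ℕ) (S : Finset ℤ) : ZMod 2 :=
  ∑ s ∈ S, ∑ t ∈ S, if s < t then f n (t - s) else 0

lemma f_add_n {n : ℕ} (hn : 0 < n) {x : ℤ} (hx : 0 ≤ x) :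
    f n (x + n) = f n x + 1 := by
  unfold f
  have h1 : (x + n).toNat = x.toNat + n := by omega
  rw [h1, Nat.add_div_right _ hn]
  push_cast; ring

lemma f_small {n : ℕ} (hn : 0 < n) {x : ℤ} (hx : x < n) : f n x = 0 := by
  unfold f
  have : x.toNat / n = 0 := Nat.div_eq_of_lt (by omega)
  simp [this]

lemma phi_insert {n : ℕ} {x : ℤ} {T : Finset ℤ} (hx : x ∉ T) :
    phi n (insert x T) = phi n T + ∑ t ∈ T, F n x t := by
  unfold phi
  rw [Finset.sum_insert hx]
  have h1 : ∀ s : ℤ, ∑ t ∈ insert x T, (if s < t then f n (t - s) else 0)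
      = (if s < x then f n (x - s) else 0) + ∑ t ∈ T, (if s < t then f n (t - s) else 0) := by
    intro s; rw [Finset.sum_insert hx]
  simp_rw [h1]
  rw [Finset.sum_add_distrib]
  have h2 : (if x < x then f n (x - x) else 0) = 0 := by simp
  have h3 : ∀ t ∈ T, (if x < t then f n (t - x) else 0) + (if t < x then f n (x - t) else 0)
      = F n x t := by
    intro t _
    unfold F
    rcases lt_trichotomy x t with h | h | h
    · simp [h, not_lt.mpr h.le]
    · simp [h]
    · simp [h, not_lt.mpr h.le]
  calc (if x < x then f n (x - x) else 0) + ∑ t ∈ T, (if x < t then f n (t - x) else 0)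
        + (∑ s ∈ T, (if s < x then f n (x - s) else 0) + ∑ s ∈ T, ∑ t ∈ T, (if s < t then f n (t - s) else 0))
      = (∑ s ∈ T, ∑ t ∈ T, (if s < t then f n (t - s) else 0))
        + ∑ t ∈ T, ((if x < t then f n (t - x) else 0) + (if t < x then f n (x - t) else 0)) := by
        rw [h2, Finset.sum_add_distrib]; ring
    _ = _ := by rw [Finset.sum_congr rfl h3]

lemma F_pair {n : ℕ} (hn : 0 < n) {b t : ℤ} (h1 : t ≠ b) (h2 : t ≠ b + n) :
    F n (b + n) t + F n b t = if b < t ∧ t < b + n then 0 else 1 := by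
  have hn' : (0:ℤ) < n := by exact_mod_cast hn
  rcases lt_trichotomy t b with h | h | h
  · have hbn : t < b + n := by omega
    rw [if_neg (by omega)]
    unfold F
    rw [if_neg (by omega), if_pos (by omega), if_neg (by omega), if_pos h]
    have : b + n - t = (b - t) + n := by ring
    rw [this, f_add_n hn (by omega)]
    linear_combination CharTwo.add_self_eq_zero (f n (b - t))
  · exact absurd h h1
  · rcases lt_trichotomy t (b + n) with h' | h' | h'
    · rw [if_pos ⟨h, h'⟩]
      unfold F
      rw [if_neg (by omega), if_pos (by omega), if_pos h]
      rw [f_small hn (by omega), f_small hn (by omega)]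
      simp
    · exact absurd h' h2
    · rw [if_neg (by omega)]
      unfold F
      rw [if_pos h', if_pos h]
      have : t - b = (t - (b + n)) + n := by ring
      rw [this, f_add_n hn (by omega)]
      linear_combination CharTwo.add_self_eq_zero (f n (t - (b + n)))

lemma phi_move {n : ℕ} (hn : 0 < n) {S : Finset ℤ} {b : ℤ} (hb : b ∈ S) (hbn : b + n ∉ S) :
    phi n (insert (b + n) (S.erase b)) + phi n S + (S.card : ZMod 2) + 1
      = ((S.filter fun t => b < t ∧ t < b + n).card : ZMod 2) := by
  set T := S.erase b with hT
  have hbT : b ∉ T := Finset.notMem_erase _ _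
  have hbnT : b + n ∉ T := fun h => hbn (Finset.mem_of_mem_erase h)
  have hS : S = insert b T := by rw [hT, Finset.insert_erase hb]
  have h1 : phi n S = phi n T + ∑ t ∈ T, F n b t := by rw [hS]; exact phi_insert hbT
  have h2 : phi n (insert (b + n) T) = phi n T + ∑ t ∈ T, F n (b + n) t := phi_insert hbnT
  have hn' : (0:ℤ) < n := by exact_mod_cast hn
  have key : ∑ t ∈ T, (F n (b + n) t + F n b t)
      = ∑ t ∈ T, (1 + if b < t ∧ t < b + n then (1 : ZMod 2) else 0) := by
    apply Finset.sum_congr rfl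
    intro t ht
    have ht1 : t ≠ b := Finset.ne_of_mem_erase ht
    have ht2 : t ≠ b + n := fun h => hbnT (h ▸ ht)
    rw [F_pair hn ht1 ht2]
    split_ifs <;> decide
  have hfil : S.filter (fun t => b < t ∧ t < b + n) = T.filter (fun t => b < t ∧ t < b + n) := by
    rw [hT, Finset.filter_erase]
    rw [Finset.erase_eq_of_notMem]
    simp
  have hcardT : (T.card : ZMod 2) = (S.card : ZMod 2) + 1 := by
    have : S.card = T.card + 1 := by rw [hS, Finset.card_insert_of_notMem hbT]
    rw [this]; push_cast; linear_combination (-1 : ZMod 2) * (CharTwo.two_eq_zero : (2 : ZMod 2) = 0)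
  have hsum : ∑ t ∈ T, (1 + if b < t ∧ t < b + n then (1 : ZMod 2) else 0)
      = (T.card : ZMod 2) + ((T.filter fun t => b < t ∧ t < b + n).card : ZMod 2) := by
    rw [Finset.sum_add_distrib, Finset.sum_const, Finset.sum_boole]
    simp
  rw [h1, h2, hfil]
  rw [Finset.sum_add_distrib] at key
  calc phi n T + ∑ t ∈ T, F n (b + n) t + (phi n T + ∑ t ∈ T, F n b t) + S.card + 1
      = (∑ t ∈ T, F n (b + n) t + ∑ t ∈ T, F n b t) + (S.card + 1)
        + (phi n T + phi n T) := by ring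
    _ = ((T.filter fun t => b < t ∧ t < b + n).card : ZMod 2) := by
        rw [key, hsum, hcardT, CharTwo.add_self_eq_zero (phi n T)]
        ring_nf
        linear_combination CharTwo.add_self_eq_zero ((S.card : ZMod 2) + 1)

/-! ### Paths and the structure of ribbons in skew shapes -/

lemma adj_row_bound {p q : ℕ × ℕ} (h : Adj p q) : q.1 ≤ p.1 + 1 ∧ p.1 ≤ q.1 + 1 := by
  rcases h with ⟨h1, _⟩ | ⟨_, h2⟩ <;> omega

lemma mem_of_path {B : Finset (ℕ × ℕ)} {p q : ℕ × ℕ}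
    (h : Relation.ReflTransGen (fun p q => q ∈ B ∧ Adj p q) p q) (hp : p ∈ B) : q ∈ B := by
  induction h with
  | refl => exact hp
  | tail _ hbc _ => exact hbc.1

lemma path_row_ivt {B : Finset (ℕ × ℕ)} {p q : ℕ × ℕ} (hp : p ∈ B)
    (h : Relation.ReflTransGen (fun p q => q ∈ B ∧ Adj p q) p q)
    {r : ℕ} (h1 : p.1 ≤ r) (h2 : r ≤ q.1) : ∃ x ∈ B, x.1 = r := by
  induction h with
  | refl => exact ⟨p, hp, by omega⟩
  | @tail b c hab hbc ih =>
    rcases le_or_gt r b.1 with hb | hb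
    · exact ih hb
    · have := adj_row_bound hbc.2
      have : c.1 = r := by omega
      exact ⟨c, hbc.1, this⟩

lemma path_cross {B : Finset (ℕ × ℕ)} {p q : ℕ × ℕ} (hp : p ∈ B)
    (h : Relation.ReflTransGen (fun p q => q ∈ B ∧ Adj p q) p q)
    {i : ℕ} (h1 : p.1 ≤ i) (h2 : i + 1 ≤ q.1) :
    ∃ x : ℕ, (i, x) ∈ B ∧ (i + 1, x) ∈ B := by
  induction h with
  | refl => omega
  | @tail b c hab hbc ih =>
    rcases le_or_gt (i + 1) b.1 with hb | hb
    · exact ih hb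
    · have hbd := adj_row_bound hbc.2
      have hc1 : c.1 = i + 1 := by omega
      have hb1 : b.1 = i := by omega
      have hbB : b ∈ B := mem_of_path hab hp
      have hcol : b.2 = c.2 := by
        rcases hbc.2 with ⟨h', _⟩ | ⟨h', _⟩
        · omega
        · exact h'
      refine ⟨b.2, ?_, ?_⟩
      · rw [show ((i : ℕ), b.2) = b from Prod.ext hb1.symm rfl]; exact hbB
      · rw [hcol, show ((i + 1 : ℕ), c.2) = c from Prod.ext hc1.symm rfl]; exact hbc.1

lemma rowLen_le_rowLen {ν ν' : YoungDiagram} (h : ν ≤ ν') (i : ℕ) :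
    ν.rowLen i ≤ ν'.rowLen i := by
  by_contra hc
  push_neg at hc
  have h1 : (i, ν'.rowLen i) ∈ ν := YoungDiagram.mem_iff_lt_rowLen.mpr hc
  have h2 : (i, ν'.rowLen i) ∈ ν' := YoungDiagram.cells_subset_iff.mpr h h1
  exact absurd (YoungDiagram.mem_iff_lt_rowLen.mp h2) (lt_irrefl _)

lemma colLen_le_colLen {ν ν' : YoungDiagram} (h : ν ≤ ν') (j : ℕ) :
    ν.colLen j ≤ ν'.colLen j := by
  by_contra hc
  push_neg at hc
  have h1 : (ν'.colLen j, j) ∈ ν := YoungDiagram.mem_iff_lt_colLen.mpr hc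
  have h2 : (ν'.colLen j, j) ∈ ν' := YoungDiagram.cells_subset_iff.mpr h h1
  exact absurd (YoungDiagram.mem_iff_lt_colLen.mp h2) (lt_irrefl _)

lemma mem_diff_iff {ν ν' : YoungDiagram} {i j : ℕ} :
    (i, j) ∈ ν'.cells \ ν.cells ↔ ν.rowLen i ≤ j ∧ j < ν'.rowLen i := by
  rw [Finset.mem_sdiff, YoungDiagram.mem_cells, YoungDiagram.mem_cells,
    YoungDiagram.mem_iff_lt_rowLen, YoungDiagram.mem_iff_lt_rowLen]
  omega

lemma ribbon_structure {n : ℕ} (hn : 0 < n) {ν ν' : YoungDiagram} (hsub : ν ≤ ν')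
    (hrib : IsRibbon n (ν'.cells \ ν.cells)) :
    ∃ a c : ℕ, a ≤ c ∧
      (∀ i, ν.rowLen i < ν'.rowLen i ↔ (a ≤ i ∧ i ≤ c)) ∧
      (∀ i, a ≤ i → i < c → ν'.rowLen (i + 1) = ν.rowLen i + 1) ∧
      ribbonHt (ν'.cells \ ν.cells) = c - a ∧
      (ν'.rowLen a : ℤ) = ν.rowLen c + n - (c - a) ∧
      0 < ν'.rowLen c := by
  obtain ⟨hcard, hconn, hcont⟩ := hrib
  set B := ν'.cells \ ν.cells with hB
  have hBne : B.Nonempty := Finset.card_pos.mp (by rw [hcard]; exact hn)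
  set R := B.image Prod.fst with hR
  have hRne : R.Nonempty := hBne.image _
  set a := R.min' hRne with ha
  set c := R.max' hRne with hc
  have hac : a ≤ c := R.min'_le _ (R.max'_mem hRne)
  obtain ⟨pa, hpa, hpa1⟩ := Finset.mem_image.mp (R.min'_mem hRne)
  obtain ⟨pc, hpc, hpc1⟩ := Finset.mem_image.mp (R.max'_mem hRne)
  rw [← ha] at hpa1
  rw [← hc] at hpc1
  clear_value a c
  have hrows : ∀ r, a ≤ r → r ≤ c → ∃ x : ℕ, (r, x) ∈ B := by
    intro r hr1 hr2
    obtain ⟨x, hx, hx1⟩ := path_row_ivt hpa (hconn pa hpa pc hpc) (r := r) (by omega) (by omega)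
    exact ⟨x.2, by rwa [show ((r : ℕ), x.2) = x from Prod.ext hx1.symm rfl]⟩
  have hiff : ∀ i, ν.rowLen i < ν'.rowLen i ↔ (a ≤ i ∧ i ≤ c) := by
    intro i
    constructor
    · intro hlt
      have hmem : (i, ν.rowLen i) ∈ B := mem_diff_iff.mpr ⟨le_refl _, hlt⟩
      have : i ∈ R := Finset.mem_image.mpr ⟨_, hmem, rfl⟩
      exact ⟨le_trans (le_of_eq ha) (R.min'_le _ this), le_trans (R.le_max' _ this) (le_of_eq hc.symm)⟩
    · rintro ⟨h1, h2⟩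
      obtain ⟨x, hx⟩ := hrows i h1 h2
      have := mem_diff_iff.mp hx
      omega
  have hcons : ∀ i, a ≤ i → i < c → ν'.rowLen (i + 1) = ν.rowLen i + 1 := by
    intro i hi1 hi2
    obtain ⟨x, hx1, hx2⟩ := path_cross hpa (hconn pa hpa pc hpc) (i := i) (by omega) (by omega)
    have hb1 := mem_diff_iff.mp hx1
    have hb2 := mem_diff_iff.mp hx2
    have hge : ν.rowLen i + 1 ≤ ν'.rowLen (i + 1) := by omega
    by_contra hne
    have hgt : ν.rowLen i + 2 ≤ ν'.rowLen (i + 1) := by omega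
    have hrow1 : ν.rowLen (i + 1) < ν'.rowLen (i + 1) := (hiff (i + 1)).mpr ⟨by omega, by omega⟩
    set y := ν'.rowLen (i + 1) - 1 with hy
    have hymem : ((i + 1 : ℕ), y) ∈ B := mem_diff_iff.mpr ⟨by omega, by omega⟩
    have hy1 : ν.rowLen i ≤ y - 1 := by omega
    have hrl : ν'.rowLen (i + 1) ≤ ν'.rowLen i := ν'.rowLen_anti i (i + 1) (by omega)
    have hymem' : ((i : ℕ), y - 1) ∈ B := mem_diff_iff.mpr ⟨hy1, by omega⟩
    have heq := hcont _ hymem' _ hymem (by unfold content; push_cast; omega)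
    have : i = i + 1 := congrArg Prod.fst heq
    omega
  have hmono : ∀ i, ν.rowLen i ≤ ν'.rowLen i := rowLen_le_rowLen hsub
  have hfiber : ∀ i : ℕ, B.filter (fun p => p.1 = i)
      = (Finset.Ico (ν.rowLen i) (ν'.rowLen i)).image (fun j => (i, j)) := by
    intro i
    ext ⟨r, x⟩
    simp only [Finset.mem_filter, Finset.mem_image, Finset.mem_Ico]
    constructor
    · rintro ⟨hmem, rfl⟩
      exact ⟨x, mem_diff_iff.mp hmem, rfl⟩
    · rintro ⟨j, hj, hjeq⟩
      cases hjeq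
      exact ⟨mem_diff_iff.mpr hj, rfl⟩
  have hcardsum : (B.card : ℤ) = ∑ i ∈ Finset.Icc a c, ((ν'.rowLen i : ℤ) - ν.rowLen i) := by
    have hmaps : ∀ p ∈ B, p.1 ∈ Finset.Icc a c := by
      intro p hp
      have : p.1 ∈ R := Finset.mem_image.mpr ⟨p, hp, rfl⟩
      exact Finset.mem_Icc.mpr ⟨le_trans (le_of_eq ha) (R.min'_le _ this), le_trans (R.le_max' _ this) (le_of_eq hc.symm)⟩
    rw [Finset.card_eq_sum_card_fiberwise hmaps]
    push_cast
    apply Finset.sum_congr rfl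
    intro i _
    rw [hfiber i, Finset.card_image_of_injective _
      (fun x y h => by injection h), Nat.card_Ico]
    have := hmono i
    omega
  have htel : ∀ k, a ≤ k → k ≤ c →
      (∑ i ∈ Finset.Icc a k, ((ν'.rowLen i : ℤ) - ν.rowLen i))
        = (ν'.rowLen a : ℤ) - ν.rowLen k + (k - a) := by
    intro k hk1 hk2
    clear hcardsum
    induction k with
    | zero =>
      have h0 : a = 0 := by omega
      rw [h0]
      simp
    | succ m ih =>
      rcases Nat.lt_or_ge a (m + 1) with hlt | hge
      · have ham : a ≤ m := by omega
        have hmc : m ≤ c := by omega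
        rw [Finset.sum_Icc_succ_top (by omega), ih ham hmc]
        rw [hcons m ham (by omega)]
        push_cast
        ring
      · have h0 : a = m + 1 := by omega
        rw [h0]
        simp
  have hsum := htel c hac (le_refl c)
  rw [← hcardsum, hcard] at hsum
  have himg : B.image Prod.fst = Finset.Icc a c := by
    ext i
    rw [Finset.mem_Icc]
    constructor
    · intro hi
      exact ⟨le_trans (le_of_eq ha) (R.min'_le _ hi), le_trans (R.le_max' _ hi) (le_of_eq hc.symm)⟩
    · rintro ⟨h1, h2⟩
      obtain ⟨x, hx⟩ := hrows i h1 h2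
      exact Finset.mem_image.mpr ⟨_, hx, rfl⟩
  have hht : ribbonHt B = c - a := by
    rw [ribbonHt, himg, Nat.card_Icc]
    omega
  have hclast : 0 < ν'.rowLen c := by
    have := (hiff c).mpr ⟨hac, le_refl c⟩
    omega
  exact ⟨a, c, hac, hiff, hcons, hht, by omega, hclast⟩

/-! ### Beta sets -/

def beta (ν : YoungDiagram) (N i : ℕ) : ℤ := (ν.rowLen i : ℤ) + N - 1 - i

lemma beta_strictAnti (ν : YoungDiagram) (N : ℕ) : StrictAnti (beta ν N) := by
  apply strictAnti_nat_of_succ_lt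
  intro i
  have := ν.rowLen_anti i (i + 1) (by omega)
  unfold beta; push_cast; omega

def betaSet (ν : YoungDiagram) (N : ℕ) : Finset ℤ := (Finset.range N).image (beta ν N)

lemma betaSet_card (ν : YoungDiagram) (N : ℕ) : (betaSet ν N).card = N := by
  rw [betaSet, Finset.card_image_of_injective _ (beta_strictAnti ν N).injective,
    Finset.card_range]

lemma step_parity {n : ℕ} (hn : 0 < n) {ν ν' : YoungDiagram} (hsub : ν ≤ ν')
    (hrib : IsRibbon n (ν'.cells \ ν.cells)) {N : ℕ} (hN : ν'.colLen 0 ≤ N) :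
    (ribbonHt (ν'.cells \ ν.cells) : ZMod 2)
      = phi n (betaSet ν' N) + phi n (betaSet ν N) + N + 1 := by
  obtain ⟨a, c, hac, hiff, hcons, hht, hsum, hcpos⟩ := ribbon_structure hn hsub hrib
  have hcN : c < N := by
    have h1 : ((c : ℕ), 0) ∈ ν' := YoungDiagram.mem_iff_lt_rowLen.mpr hcpos
    have h2 := YoungDiagram.mem_iff_lt_colLen.mp h1
    omega
  have haN : a < N := lt_of_le_of_lt hac hcN
  set b : ℤ := beta ν N c with hb
  have houtside : ∀ i, i < a ∨ c < i → ν'.rowLen i = ν.rowLen i := by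
    intro i hi
    have h1 := (hiff i)
    have h2 := rowLen_le_rowLen hsub i
    omega
  have hbeta_out : ∀ i, i < a ∨ c < i → beta ν' N i = beta ν N i := by
    intro i hi; unfold beta; rw [houtside i hi]
  have hbeta_shift : ∀ i, a ≤ i → i < c → beta ν' N (i + 1) = beta ν N i := by
    intro i h1 h2
    unfold beta
    rw [hcons i h1 h2]
    push_cast; ring
  have hbeta_a : beta ν' N a = b + n := by
    rw [hb]; unfold beta
    omega
  have hanti := beta_strictAnti ν N
  have hanti' := beta_strictAnti ν' N
  have hbmem : b ∈ betaSet ν N := Finset.mem_image.mpr ⟨c, Finset.mem_range.mpr hcN, rfl⟩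
  have hbn_not : b + n ∉ betaSet ν N := by
    intro hmem
    obtain ⟨j, hj, hje⟩ := Finset.mem_image.mp hmem
    rw [Finset.mem_range] at hj
    by_cases h1 : j < a
    · have e1 := hbeta_out j (Or.inl h1)
      have e2 := hanti' h1
      omega
    · by_cases h2 : c < j
      · have e1 := hbeta_out j (Or.inr h2)
        have e2 := hanti' (show a < j by omega)
        omega
      · by_cases h3 : j = c
        · rw [h3] at hje
          omega
        · have e1 := hbeta_shift j (by omega) (by omega)
          have e2 := hanti' (show a < j + 1 by omega)
          omega
  have hset : betaSet ν' N = insert (b + n) ((betaSet ν N).erase b) := by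
    ext s
    simp only [betaSet, Finset.mem_insert, Finset.mem_erase, Finset.mem_image, Finset.mem_range]
    constructor
    · rintro ⟨i, hi, rfl⟩
      by_cases h1 : i = a
      · left; rw [h1, hbeta_a]
      · right
        by_cases h2 : a < i ∧ i ≤ c
        · have e1 := hbeta_shift (i - 1) (by omega) (by omega)
          have hi1 : i - 1 + 1 = i := by omega
          rw [hi1] at e1
          have e2 := hanti (show i - 1 < c by omega)
          exact ⟨by omega, i - 1, by omega, e1.symm⟩
        · have hout : i < a ∨ c < i := by omega
          have e1 := hbeta_out i hout
          refine ⟨?_, i, hi, e1.symm⟩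
          rcases hout with h | h
          · have e2 := hanti (show i < c by omega)
            omega
          · have e2 := hanti h
            omega
    · rintro (rfl | ⟨hne, i, hi, rfl⟩)
      · exact ⟨a, haN, hbeta_a⟩
      · by_cases h1 : i < a
        · exact ⟨i, hi, hbeta_out i (Or.inl h1)⟩
        · by_cases h2 : c < i
          · exact ⟨i, hi, hbeta_out i (Or.inr h2)⟩
          · have hic : i ≠ c := by
              intro h
              rw [h] at hne
              exact hne hb.symm
            exact ⟨i + 1, by omega, hbeta_shift i (by omega) (by omega)⟩
  have hfiltercard : ((betaSet ν N).filter fun t => b < t ∧ t < b + n).card = c - a := by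
    have himg2 : (betaSet ν N).filter (fun t => b < t ∧ t < b + n)
        = (Finset.Ico a c).image (beta ν N) := by
      ext s
      simp only [Finset.mem_filter, betaSet, Finset.mem_image, Finset.mem_range, Finset.mem_Ico]
      constructor
      · rintro ⟨⟨i, hi, rfl⟩, hlt1, hlt2⟩
        refine ⟨i, ⟨?_, ?_⟩, rfl⟩
        · by_contra hia
          push_neg at hia
          have e1 := hbeta_out i (Or.inl hia)
          have e2 := hanti' hia
          omega
        · by_contra hic
          push_neg at hic
          by_cases h3 : i = c
          · rw [h3] at hlt1
            omega
          · have e2 := hanti (show c < i by omega)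
            omega
      · rintro ⟨i, ⟨h1, h2⟩, rfl⟩
        refine ⟨⟨i, by omega, rfl⟩, ?_, ?_⟩
        · have := hanti h2
          omega
        · have e1 := hbeta_shift i h1 h2
          have e2 := hanti' (show a < i + 1 by omega)
          omega
    rw [himg2, Finset.card_image_of_injective _ (beta_strictAnti ν N).injective, Nat.card_Ico]
  have hmove := phi_move hn hbmem hbn_not
  rw [betaSet_card, ← hset, hfiltercard] at hmove
  rw [hht]
  exact hmove.symm

lemma telesc (g : ℕ → ZMod 2) (C : ZMod 2) (d : ℕ) :
    ∑ i ∈ Finset.range d, (g (i + 1) + g i + C) = g d + g 0 + d * C := by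
  induction d with
  | zero =>
    simp only [Finset.sum_range_zero, Nat.cast_zero, zero_mul, add_zero]
    linear_combination -CharTwo.add_self_eq_zero (g 0)
  | succ m ih =>
    rw [Finset.sum_range_succ, ih]
    push_cast
    linear_combination CharTwo.add_self_eq_zero (g m)

lemma chain_subset_chain {n : ℕ} {μ lam : YoungDiagram} (T : RibbonTableau n μ lam) :
    ∀ k i, i + k ≤ T.len → (T.chain i).cells ⊆ (T.chain (i + k)).cells := by
  intro k
  induction k with
  | zero => intro i _; exact subset_rfl
  | succ m ih =>
    intro i h
    have h1 := ih i (by omega)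
    have h2 := T.mono (i + m) (by omega)
    exact h1.trans h2

lemma chain_le_lam {n : ℕ} {μ lam : YoungDiagram} (T : RibbonTableau n μ lam)
    {i : ℕ} (h : i ≤ T.len) : T.chain i ≤ lam := by
  have h1 := chain_subset_chain T (T.len - i) i (by omega)
  rw [show i + (T.len - i) = T.len by omega, T.last] at h1
  exact YoungDiagram.cells_subset_iff.mp h1

lemma chain_card {n : ℕ} {μ lam : YoungDiagram} (T : RibbonTableau n μ lam) :
    ∀ i ≤ T.len, (T.chain i).cells.card = μ.cells.card + i * n := by
  intro i
  induction i with
  | zero => intro _; rw [T.first]; simp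
  | succ m ih =>
    intro h
    have h1 := ih (by omega)
    have h2 := (T.ribbon m (by omega)).1
    have h3 := Finset.card_sdiff_add_card_eq_card (T.mono m (by omega))
    rw [Nat.succ_mul]
    omega

lemma tableau_parity {n : ℕ} (hn : 0 < n) {μ lam : YoungDiagram} (T : RibbonTableau n μ lam)
    {N : ℕ} (hN : lam.colLen 0 ≤ N) :
    (T.ht : ZMod 2) = phi n (betaSet lam N) + phi n (betaSet μ N)
      + T.len * ((N : ZMod 2) + 1) := by
  have hstep : ∀ i ∈ Finset.range T.len,
      ((ribbonHt ((T.chain (i + 1)).cells \ (T.chain i).cells) : ZMod 2))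
        = (fun j => phi n (betaSet (T.chain j) N)) (i + 1)
          + (fun j => phi n (betaSet (T.chain j) N)) i + ((N : ZMod 2) + 1) := by
    intro i hi
    rw [Finset.mem_range] at hi
    have hsub : T.chain i ≤ T.chain (i + 1) := YoungDiagram.cells_subset_iff.mp (T.mono i hi)
    have hcl : (T.chain (i + 1)).colLen 0 ≤ N :=
      le_trans (colLen_le_colLen (chain_le_lam T (by omega)) 0) hN
    have h := step_parity hn hsub (T.ribbon i hi) hcl
    rw [h]
    ring
  rw [RibbonTableau.ht]
  push_cast
  rw [Finset.sum_congr rfl hstep]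
  refine (telesc (fun j => phi n (betaSet (T.chain j) N)) ((N : ZMod 2) + 1) T.len).trans ?_
  rw [T.first, T.last]

end RibbonParity

/-- any two `n`-ribbon tableaux of the same skew shape `λ \ μ` have
heights of the same parity. -/
theorem ribbon_tableau_ht_parity (n : ℕ) (hn : 1 ≤ n)
    (μ lam : YoungDiagram) (hml : μ ≤ lam)
    (T T' : RibbonTableau n μ lam) :
    T.ht % 2 = T'.ht % 2 := by
  have hn0 : 0 < n := hn
  have h1 := RibbonParity.tableau_parity hn0 T (le_refl (lam.colLen 0))
  have h2 := RibbonParity.tableau_parity hn0 T' (le_refl (lam.colLen 0))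
  have hc1 := RibbonParity.chain_card T T.len le_rfl
  have hc2 := RibbonParity.chain_card T' T'.len le_rfl
  rw [T.last] at hc1
  rw [T'.last] at hc2
  have hlen : T.len = T'.len := by
    have h : T.len * n = T'.len * n := by omega
    exact Nat.eq_of_mul_eq_mul_right hn0 h
  have heq : (T.ht : ZMod 2) = (T'.ht : ZMod 2) := by rw [h1, h2, hlen]
  have hmod := (ZMod.natCast_eq_natCast_iff _ _ _).mp heq
  exact hmod
end

section
/- Let R be a commutative ring and let q, t ∈ R be invertible. Let m ∈ ℤ, n ≥ 1 with gcd(m,n) = 1, k ≥ 1 and 2 ≤ l ≤ nk be integers. Then, with all powers of q and t interpreted as integer powers of units of R, the following identity holds: t^{(l−1)·⌊m(1−l)/n⌋} · q^{(nk−l+1)·⌊m(nk−l+1)/n⌋} · (1 − t·q^{−1}) · Σ_{i=0}^{n−1} q^{Σ_{j=1}^{nk−l+1} ⌊(−mj+i)/n⌋} · t^{Σ_{j=1}^{l−2} ⌊(mj+i)/n⌋} + t^{⌊m(1−l)/n⌋+1} · q^{−⌊m(nk−l+1)/n⌋−1} · (1 − t^{1−l}·q^{−nk+l−1}) · Σ_{i=0}^{n−1}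 q^{Σ_{j=1}^{nk−l+1} ⌊(mj+i)/n⌋} · t^{Σ_{j=1}^{l−2} ⌊(−mj+i)/n⌋} = (1 − t^{2−l}·q^{−nk+l−2}) · Σ_{i=0}^{n−1} q^{Σ_{j=1}^{nk−l} ⌊(mj+i)/n⌋} · t^{Σ_{j=1}^{l−1} ⌊(−mj+i)/n⌋}. -/
/-!
Write `A_M(x) = ∑_{j=1}^M ⌊(-m j + x)/n⌋` and `B_M(x) = ∑_{j=1}^M ⌊(m j + x)/n⌋` (these are
`floorSum (-m) n M x` and `floorSum m n M x`), and put
`N = nk - l + 1`, `L = l - 2`, so that `m (N + L + 1) ≡ 0 (mod n)`. Each of the three sums over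
`i ∈ [0, n)` is re-indexed by an involution of the residues mod `n`. The reflection `i ↦ n - 1 - i`
exchanges `A` and `B` up to sign, since `⌊(n - 1 - y)/n⌋ = -⌊y/n⌋`. The involution
`i ↦ (mN - 1 - i) mod n`, combined with the reversal `j ↦ M + 1 - j` of the inner sums, expresses
`A_N` and `B_L` at the image of `i` through `A_N(i)`, `B_L(i)` and the single carry
`δᵢ = ⌊(i - mN)/n⌋ ∈ {-⌊mN/n⌋, -⌊mN/n⌋ - 1}`. After these substitutions the identity holds
summand by summand.
-/

open Finset

theorem Int.neg_one_sub_ediv {n : ℤ} (hn : 0 < n) (y : ℤ) : (-1 - y) / n = -(y / n) - 1 := by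
  have := Int.emod_def y n
  have := Int.emod_nonneg y hn.ne'
  have := Int.emod_lt_of_pos y hn
  exact ((Int.ediv_emod_unique (r := n - 1 - y % n) hn).mpr ⟨by linarith, by linarith, by linarith⟩).1

theorem Int.sub_ediv_eq_or {n x : ℤ} (hx0 : 0 ≤ x) (hxn : x < n) (y : ℤ) :
    (x - y) / n = -(y / n) ∨ (x - y) / n = -(y / n) - 1 := by
  have hn : 0 < n := by omega
  have hxy : x - y = (x - y % n) + n * -(y / n) := by linarith [Int.emod_def y n]
  rw [hxy, Int.add_mul_ediv_left _ _ hn.ne']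
  have := Int.emod_nonneg y hn.ne'
  have := Int.emod_lt_of_pos y hn
  rcases le_or_gt (y % n) x with h | h
  · left; rw [Int.ediv_eq_zero_of_lt (by omega) (by omega), zero_add]
  · right
    rw [((Int.ediv_emod_unique (r := x - y % n + n) (q := -1) hn).mpr ⟨by ring, by omega, by omega⟩).1]
    ring

theorem Int.emod_sub_emod_sub {n x : ℤ} (hx0 : 0 ≤ x) (hxn : x < n) (c : ℤ) :
    (c - (c - x) % n) % n = x := by
  rw [Int.emod_def (c - x) n, show c - (c - x - n * ((c - x) / n)) = x + n * ((c - x) / n) by ring,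
    Int.add_mul_emod_self_left, Int.emod_eq_of_lt hx0 hxn]

theorem sum_range_comp_sub_emod {α : Type*} [AddCommMonoid α] (n : ℕ) (c : ℤ) (f : ℤ → α) :
    ∑ i ∈ range n, f ((c - i) % n) = ∑ i ∈ range n, f i := by
  have hmem : ∀ a ∈ range n, 0 ≤ (c - a) % n ∧ (c - a) % n < n := fun a ha => by
    have hn : (0 : ℤ) < n := by have := mem_range.mp ha; omega
    exact ⟨Int.emod_nonneg _ hn.ne', Int.emod_lt_of_pos _ hn⟩
  have hinv : ∀ a ∈ range n, ((c - ((c - a) % n).toNat) % n).toNat = a := fun a ha => by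
    rw [Int.toNat_of_nonneg (hmem a ha).1,
      Int.emod_sub_emod_sub (Int.natCast_nonneg a) (by simpa using ha)]
    simp
  refine sum_nbij' (fun a => ((c - a) % n).toNat) (fun a => ((c - a) % n).toNat)
    (fun a ha => ?_) (fun a ha => ?_) hinv hinv (fun a ha => ?_)
  all_goals have := hmem a ha
  · simp only [mem_range]; omega
  · simp only [mem_range]; omega
  · rw [Int.toNat_of_nonneg this.1]

noncomputable def floorSum (m n M x : ℤ) : ℤ := ∑ j ∈ Icc 1 M, (m * j + x) / n

section floorSum

variable {m n M : ℤ}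

theorem floorSum_add_mul (hn : n ≠ 0) (hM : 0 ≤ M) (x c : ℤ) :
    floorSum m n M (x + n * c) = floorSum m n M x + M * c := by
  simp only [floorSum, ← add_assoc, Int.add_mul_ediv_left _ _ hn, sum_add_distrib, sum_const,
    Int.card_Icc, add_sub_cancel_right, nsmul_eq_mul, Int.toNat_of_nonneg hM]

theorem floorSum_neg_one_sub (hn : 0 < n) (hM : 0 ≤ M) (x : ℤ) :
    floorSum m n M (-1 - x) = -floorSum (-m) n M x - M := by
  have hterm : ∀ j, (m * j + (-1 - x)) / n = -((-m * j + x) / n) - 1 := fun j => by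
    rw [← Int.neg_one_sub_ediv hn]; ring_nf
  simp only [floorSum, hterm, sum_sub_distrib, sum_neg_distrib, sum_const, Int.card_Icc,
    add_sub_cancel_right, nsmul_eq_mul, Int.toNat_of_nonneg hM, mul_one]

theorem floorSum_sub_mul_add_one (x : ℤ) :
    floorSum m n M (x - m * (M + 1)) = floorSum (-m) n M x := by
  refine sum_nbij' (fun j => M + 1 - j) (fun j => M + 1 - j) ?_ ?_ ?_ ?_ ?_ <;>
    intro j hj <;> simp only [mem_Icc] at hj ⊢
  · omega
  · omega
  · omega
  · omega
  · ring_nf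

theorem floorSum_add_one (hM : 0 ≤ M) (x : ℤ) :
    floorSum m n (M + 1) x = floorSum m n M x + (m * (M + 1) + x) / n := by
  rw [floorSum, ← insert_Icc_right_eq_Icc_add_one (by omega), sum_insert (by simp), add_comm]
  rfl

theorem floorSum_sub (hM : 0 ≤ M) (x : ℤ) :
    floorSum m n M (x - m) = floorSum m n M x + x / n - (m * M + x) / n := by
  induction M, hM using Int.leInduction with
  | base => simp [floorSum]
  | succ M hM ih =>
    rw [floorSum_add_one hM, floorSum_add_one hM, ih]
    ring_nf

theorem floorSum_emod_sub_one_sub (hn : 0 < n) (hM : 0 ≤ M) (c x : ℤ) :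
    floorSum m n M ((c - 1 - x) % n) = -floorSum (-m) n M (x - c) + M * ((x - c) / n) := by
  rw [Int.emod_def, sub_eq_add_neg, ← mul_neg, floorSum_add_mul hn.ne' hM,
    show c - 1 - x = -1 - (x - c) by ring, floorSum_neg_one_sub hn hM, Int.neg_one_sub_ediv hn]
  ring

end floorSum

section HookSums

variable {R : Type*} [CommRing R] (q t : Rˣ)

def qtMonomial (e f : ℤ) : R := ((q ^ e * t ^ f : Rˣ) : R)

theorem qtMonomial_mul (e f e' f' : ℤ) :
    qtMonomial q t e f * qtMonomial q t e' f' = (qtMonomial q t (e + e') (f + f') : R) := by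
  simp only [qtMonomial, ← Units.val_mul, zpow_add]
  congr 1
  exact mul_mul_mul_comm _ _ _ _

/- With `P = q^(-a-β) t^(β-K-b)`, `Y = q^(-N-1) t^(-L)`, `Z = t q⁻¹` and `δ = -β - χ`, the two sides
are `P (Y^χ (1 - Z) + (Z - Y))` and `P (1 - Y) Z^χ`, which agree for `χ ∈ {0, 1}`. -/
theorem hook_term_identity (β K N L a b δ : ℤ) (hδ : δ = -β ∨ δ = -β - 1) :
    ((t ^ ((L + 1) * (β - K)) : Rˣ) : R) * ((q ^ (N * β) : Rˣ) : R) *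
          (1 - (t : R) * ((q⁻¹ : Rˣ) : R)) *
          (((q ^ (-a + (N + 1) * δ) : Rˣ) : R) * ((t ^ (-b + L * (K + δ)) : Rˣ) : R)) +
        ((t ^ (β - K + 1) : Rˣ) : R) * ((q ^ (-β - 1) : Rˣ) : R) *
          (1 - ((t ^ (-(L + 1)) : Rˣ) : R) * ((q ^ (-N) : Rˣ) : R)) *
          (((q ^ (-a) : Rˣ) : R) * ((t ^ (-b) : Rˣ) : R)) =
      (1 - ((t ^ (-L) : Rˣ) : R) * ((q ^ (-N - 1) : Rˣ) : R)) *
        (((q ^ (-a + δ) : Rˣ) : R) * ((t ^ (-b - K - δ) : Rˣ) : R)) := by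
  have hq : ∀ e, ((q ^ e : Rˣ) : R) = qtMonomial q t e 0 := fun e => by simp [qtMonomial]
  have ht : ∀ f, ((t ^ f : Rˣ) : R) = qtMonomial q t 0 f := fun f => by simp [qtMonomial]
  have h1 : (t : R) * ((q⁻¹ : Rˣ) : R) = qtMonomial q t (-1) 1 := by
    simp [qtMonomial, mul_comm]
  rw [h1]
  simp only [hq, ht, mul_sub, sub_mul, mul_one, one_mul, qtMonomial_mul]
  rcases hδ with rfl | rfl <;> ring_nf

theorem sum_floorSum_reflect (n : ℕ) (m : ℤ) {M M' : ℤ} (hM : 0 ≤ M) (hM' : 0 ≤ M') :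
    ∑ i ∈ range n, ((q ^ floorSum m n M i : Rˣ) : R) * ((t ^ floorSum (-m) n M' i : Rˣ) : R) =
      ∑ i ∈ range n,
        ((q ^ (-floorSum (-m) n M i) : Rˣ) : R) * ((t ^ (-floorSum m n M' i) : Rˣ) : R) := by
  rw [← sum_range_comp_sub_emod n (0 - 1) fun x =>
    ((q ^ floorSum m n M x : Rˣ) : R) * ((t ^ floorSum (-m) n M' x : Rˣ) : R)]
  refine sum_congr rfl fun i hi => ?_
  have hn : (0 : ℤ) < n := by have := mem_range.mp hi; omega
  have hi0 : (i : ℤ) / n = 0 := Int.ediv_eq_zero_of_lt (by positivity) (by simpa using hi)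
  simp only [floorSum_emod_sub_one_sub hn hM, floorSum_emod_sub_one_sub hn hM', sub_zero, hi0,
    mul_zero, add_zero, neg_neg]

variable {n : ℕ} {m N L K : ℤ}

theorem sum_floorSum_dual (hN : 0 ≤ N) (hL : 0 ≤ L) (hK : m * (N + L + 1) = n * K) :
    ∑ i ∈ range n, ((q ^ floorSum (-m) n N i : Rˣ) : R) * ((t ^ floorSum m n L i : Rˣ) : R) =
      ∑ i ∈ range n,
        ((q ^ (-floorSum (-m) n N i + (N + 1) * ((i - m * N) / n)) : Rˣ) : R) *
          ((t ^ (-floorSum m n L i + L * (K + (i - m * N) / n)) : Rˣ) : R) := by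
  rw [← sum_range_comp_sub_emod n (m * N - 1) fun x =>
    ((q ^ floorSum (-m) n N x : Rˣ) : R) * ((t ^ floorSum m n L x : Rˣ) : R)]
  refine sum_congr rfl fun i hi => ?_
  have hn : (0 : ℤ) < n := by have := mem_range.mp hi; omega
  have hi0 : (i : ℤ) / n = 0 := Int.ediv_eq_zero_of_lt (by positivity) (by simpa using hi)
  have hA : floorSum (-m) n N ((m * N - 1 - i) % n) =
      -floorSum (-m) n N i + (N + 1) * ((i - m * N) / n) := by
    have hrev := floorSum_sub_mul_add_one (m := m) (n := n) (M := N) (i + m)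
    rw [show (i : ℤ) + m - m * (N + 1) = i - m * N by ring, show (i : ℤ) + m = i - -m by ring,
      floorSum_sub hN, hi0, show -m * N + i = i - m * N by ring] at hrev
    rw [floorSum_emod_sub_one_sub hn hN, neg_neg, hrev]
    ring
  have hB : floorSum m n L ((m * N - 1 - i) % n) =
      -floorSum m n L i + L * (K + (i - m * N) / n) := by
    have hshift := floorSum_add_mul (m := -m) hn.ne' hL (i - -m * (L + 1)) (-K)
    rw [floorSum_sub_mul_add_one, neg_neg,
      show (i : ℤ) - -m * (L + 1) + n * -K = i - m * N by linear_combination hK] at hshift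
    rw [floorSum_emod_sub_one_sub hn hL, hshift]
    ring
  rw [hA, hB]

theorem sum_floorSum_pred_succ (hn : 0 < n) (hN : 1 ≤ N) (hL : 0 ≤ L)
    (hK : m * (N + L + 1) = n * K) :
    ∑ i ∈ range n,
        ((q ^ floorSum m n (N - 1) i : Rˣ) : R) * ((t ^ floorSum (-m) n (L + 1) i : Rˣ) : R) =
      ∑ i ∈ range n,
        ((q ^ (-floorSum (-m) n N i + (i - m * N) / n) : Rˣ) : R) *
          ((t ^ (-floorSum m n L i - K - (i - m * N) / n) : Rˣ) : R) := by
  rw [sum_floorSum_reflect q t n m (by omega) (by omega)]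
  refine sum_congr rfl fun i _ => ?_
  have hA := floorSum_add_one (m := -m) (n := n) (show 0 ≤ N - 1 by omega) i
  rw [sub_add_cancel, show -m * N + i = i - m * N by ring] at hA
  have hB := floorSum_add_one (m := m) (n := n) hL i
  rw [show m * (L + 1) + i = (i - m * N) + n * K by linear_combination hK,
    Int.add_mul_ediv_left _ _ (by omega)] at hB
  rw [hA, hB]
  ring_nf

theorem hook_identity_of_floorSum (hn : 0 < n) (hN : 1 ≤ N) (hL : 0 ≤ L)
    (hK : m * (N + L + 1) = n * K) :
    ((t ^ ((L + 1) * (m * -(L + 1) / n)) : Rˣ) : R) * ((q ^ (N * (m * N / n)) : Rˣ) : R) *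
          (1 - (t : R) * ((q⁻¹ : Rˣ) : R)) *
          ∑ i ∈ range n, ((q ^ floorSum (-m) n N i : Rˣ) : R) * ((t ^ floorSum m n L i : Rˣ) : R) +
        ((t ^ (m * -(L + 1) / n + 1) : Rˣ) : R) * ((q ^ (-(m * N / n) - 1) : Rˣ) : R) *
          (1 - ((t ^ (-(L + 1)) : Rˣ) : R) * ((q ^ (-N) : Rˣ) : R)) *
          ∑ i ∈ range n, ((q ^ floorSum m n N i : Rˣ) : R) * ((t ^ floorSum (-m) n L i : Rˣ) : R) =
      (1 - ((t ^ (-L) : Rˣ) : R) * ((q ^ (-N - 1) : Rˣ) : R)) *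
        ∑ i ∈ range n,
          ((q ^ floorSum m n (N - 1) i : Rˣ) : R) * ((t ^ floorSum (-m) n (L + 1) i : Rˣ) : R) := by
  have hprefactor : m * -(L + 1) / n = m * N / n - K := by
    rw [show m * -(L + 1) = m * N + n * -K by linear_combination -hK,
      Int.add_mul_ediv_left _ _ (by omega), ← sub_eq_add_neg]
  rw [hprefactor, sum_floorSum_dual q t (by omega) hL hK, sum_floorSum_reflect q t n m (by omega) hL,
    sum_floorSum_pred_succ q t hn hN hL hK, mul_sum, mul_sum, mul_sum, ← sum_add_distrib]
  refine sum_congr rfl fun i hi => hook_term_identity q t _ K N L _ _ _ ?_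
  exact Int.sub_ediv_eq_or (Int.natCast_nonneg i) (by simpa using hi) (m * N)

end HookSums

theorem hook_evaluation_identity_general (R : Type*) [CommRing R] (q t : Rˣ)
    (m : ℤ) (n : ℕ) (hn : 1 ≤ n)
    (k : ℕ) (l : ℕ) (hl2 : 2 ≤ l) (hlnk : l ≤ n * k) :
    ((t ^ (((l : ℤ) - 1) * (m * (1 - (l : ℤ)) / (n : ℤ))) : Rˣ) : R)
        * ((q ^ ((((n * k : ℕ) : ℤ) - (l : ℤ) + 1)
            * (m * (((n * k : ℕ) : ℤ) - (l : ℤ) + 1) / (n : ℤ))) : Rˣ) : R)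
        * (1 - (t : R) * ((q⁻¹ : Rˣ) : R))
        * (∑ i ∈ Finset.range n,
            ((q ^ (∑ j ∈ Finset.Icc (1 : ℤ) (((n * k : ℕ) : ℤ) - (l : ℤ) + 1),
                ((-m * j + (i : ℤ)) / (n : ℤ))) : Rˣ) : R)
            * ((t ^ (∑ j ∈ Finset.Icc (1 : ℤ) ((l : ℤ) - 2),
                ((m * j + (i : ℤ)) / (n : ℤ))) : Rˣ) : R))
    + ((t ^ (m * (1 - (l : ℤ)) / (n : ℤ) + 1) : Rˣ) : R)
        * ((q ^ (-(m * (((n * k : ℕ) : ℤ) - (l : ℤ) + 1) / (n : ℤ)) - 1) : Rˣ) : R)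
        * (1 - ((t ^ (1 - (l : ℤ)) : Rˣ) : R)
            * ((q ^ (-((n * k : ℕ) : ℤ) + (l : ℤ) - 1) : Rˣ) : R))
        * (∑ i ∈ Finset.range n,
            ((q ^ (∑ j ∈ Finset.Icc (1 : ℤ) (((n * k : ℕ) : ℤ) - (l : ℤ) + 1),
                ((m * j + (i : ℤ)) / (n : ℤ))) : Rˣ) : R)
            * ((t ^ (∑ j ∈ Finset.Icc (1 : ℤ) ((l : ℤ) - 2),
                ((-m * j + (i : ℤ)) / (n : ℤ))) : Rˣ) : R))
    = (1 - ((t ^ (2 - (l : ℤ)) : Rˣ) : R) * ((q ^ (-((n * k : ℕ) : ℤ) + (l : ℤ) - 2) : Rˣ) : R))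
        * (∑ i ∈ Finset.range n,
            ((q ^ (∑ j ∈ Finset.Icc (1 : ℤ) (((n * k : ℕ) : ℤ) - (l : ℤ)),
                ((m * j + (i : ℤ)) / (n : ℤ))) : Rˣ) : R)
            * ((t ^ (∑ j ∈ Finset.Icc (1 : ℤ) ((l : ℤ) - 1),
                ((-m * j + (i : ℤ)) / (n : ℤ))) : Rˣ) : R)) := by
  set N : ℤ := ((n * k : ℕ) : ℤ) - l + 1 with hN
  set L : ℤ := (l : ℤ) - 2 with hL
  rw [show (1 : ℤ) - l = -(L + 1) by omega, show (l : ℤ) - 1 = L + 1 by omega,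
    show ((n * k : ℕ) : ℤ) - l = N - 1 by omega, show -((n * k : ℕ) : ℤ) + l - 1 = -N by omega,
    show (2 : ℤ) - l = -L by omega, show -((n * k : ℕ) : ℤ) + l - 2 = -N - 1 by omega]
  exact hook_identity_of_floorSum q t hn (by omega) (by omega) (K := m * k)
    (by rw [hN, hL]; push_cast; ring)

/-- the key identity `eqn:desire`: let `R` be a commutative ring and
`q, t` invertible elements of `R` (given as units), `m ∈ ℤ`, `n ≥ 1` with
`gcd(m,n) = 1`, `k ≥ 1` and `2 ≤ l ≤ nk`.  All powers of `q` and `t` are integer powers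
of units, and `⌊·⌋` is floor division of integers (here `/` on `ℤ`, the divisor `n`
being positive).  Then
`t^{(l−1)⌊m(1−l)/n⌋} q^{(nk−l+1)⌊m(nk−l+1)/n⌋} (1−tq⁻¹) Σᵢ q^{Σⱼ⌊(−mj+i)/n⌋} t^{Σⱼ⌊(mj+i)/n⌋}`
`+ t^{⌊m(1−l)/n⌋+1} q^{−⌊m(nk−l+1)/n⌋−1} (1−t^{1−l}q^{−nk+l−1}) Σᵢ q^{Σⱼ⌊(mj+i)/n⌋} t^{Σⱼ⌊(−mj+i)/n⌋}`
`= (1−t^{2−l}q^{−nk+l−2}) Σᵢ q^{Σⱼ⌊(mj+i)/n⌋} t^{Σⱼ⌊(−mj+i)/n⌋}`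
with the ranges of summation as in the paper. -/
theorem hook_evaluation_identity (R : Type*) [CommRing R] (q t : Rˣ)
    (m : ℤ) (n : ℕ) (hn : 1 ≤ n) (hgcd : Int.gcd m n = 1)
    (k : ℕ) (hk : 1 ≤ k) (l : ℕ) (hl2 : 2 ≤ l) (hlnk : l ≤ n * k) :
    ((t ^ (((l : ℤ) - 1) * (m * (1 - (l : ℤ)) / (n : ℤ))) : Rˣ) : R)
        * ((q ^ ((((n * k : ℕ) : ℤ) - (l : ℤ) + 1)
            * (m * (((n * k : ℕ) : ℤ) - (l : ℤ) + 1) / (n : ℤ))) : Rˣ) : R)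
        * (1 - (t : R) * ((q⁻¹ : Rˣ) : R))
        * (∑ i ∈ Finset.range n,
            ((q ^ (∑ j ∈ Finset.Icc (1 : ℤ) (((n * k : ℕ) : ℤ) - (l : ℤ) + 1),
                ((-m * j + (i : ℤ)) / (n : ℤ))) : Rˣ) : R)
            * ((t ^ (∑ j ∈ Finset.Icc (1 : ℤ) ((l : ℤ) - 2),
                ((m * j + (i : ℤ)) / (n : ℤ))) : Rˣ) : R))
    + ((t ^ (m * (1 - (l : ℤ)) / (n : ℤ) + 1) : Rˣ) : R)
        * ((q ^ (-(m * (((n * k : ℕ) : ℤ) - (l : ℤ) + 1) / (n : ℤ)) - 1) : Rˣ) : R)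
        * (1 - ((t ^ (1 - (l : ℤ)) : Rˣ) : R)
            * ((q ^ (-((n * k : ℕ) : ℤ) + (l : ℤ) - 1) : Rˣ) : R))
        * (∑ i ∈ Finset.range n,
            ((q ^ (∑ j ∈ Finset.Icc (1 : ℤ) (((n * k : ℕ) : ℤ) - (l : ℤ) + 1),
                ((m * j + (i : ℤ)) / (n : ℤ))) : Rˣ) : R)
            * ((t ^ (∑ j ∈ Finset.Icc (1 : ℤ) ((l : ℤ) - 2),
                ((-m * j + (i : ℤ)) / (n : ℤ))) : Rˣ) : R))
    = (1 - ((t ^ (2 - (l : ℤ)) : Rˣ) : R) * ((q ^ (-((n * k : ℕ) : ℤ) + (l : ℤ) - 2) : Rˣ) : R))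
        * (∑ i ∈ Finset.range n,
            ((q ^ (∑ j ∈ Finset.Icc (1 : ℤ) (((n * k : ℕ) : ℤ) - (l : ℤ)),
                ((m * j + (i : ℤ)) / (n : ℤ))) : Rˣ) : R)
            * ((t ^ (∑ j ∈ Finset.Icc (1 : ℤ) ((l : ℤ) - 1),
                ((-m * j + (i : ℤ)) / (n : ℤ))) : Rˣ) : R)) :=
  hook_evaluation_identity_general R q t m n hn k l hl2 hlnk
end

section
/- Let a, b ∈ ℤ, n ≥ 1 and 0 ≤ i ≤ n−1 be integers. Then ⌊a/n⌋ + ⌊(−b+i)/n⌋ = ⌊(a−b)/n⌋ + ε_1 − ε_2, where ε_1 = 1 if 1 ≤ (b mod n) ≤ i and ε_1 = 0 otherwise, and ε_2 = 1 if 1 ≤ (b mod n) ≤ (a mod n) and ε_2 = 0 otherwise. -/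
lemma small_div_aux (n x : ℤ) (hn : 0 < n) (h1 : -n < x) (h2 : x < n) :
    x / n = if 0 ≤ x then 0 else -1 := by
  split_ifs with h
  · exact Int.ediv_eq_zero_of_lt h h2
  · have hx : x = (x + n) + n * (-1) := by ring
    rw [hx, Int.add_mul_ediv_left _ _ (by omega : n ≠ 0),
      Int.ediv_eq_zero_of_lt (by omega) (by omega)]
    ring

/-- for `a, b ∈ ℤ`, `n ≥ 1` and `0 ≤ i ≤ n-1`,
`⌊a/n⌋ + ⌊(-b+i)/n⌋ = ⌊(a-b)/n⌋ + ε₁ - ε₂` where `ε₁ = 1` iff `1 ≤ (b mod n) ≤ i` and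
`ε₂ = 1` iff `1 ≤ (b mod n) ≤ (a mod n)`.  (Division `/` and `%` on `ℤ` with positive
divisor `n` are floor division and the residue in `{0,…,n-1}`.) -/
theorem floor_sub_add_small (a b : ℤ) (n : ℕ) (hn : 1 ≤ n) (i : ℕ) (hi : i ≤ n - 1) :
    a / (n : ℤ) + (-b + (i : ℤ)) / (n : ℤ)
      = (a - b) / (n : ℤ)
        + (if 1 ≤ b % (n : ℤ) ∧ b % (n : ℤ) ≤ (i : ℤ) then 1 else 0)
        - (if 1 ≤ b % (n : ℤ) ∧ b % (n : ℤ) ≤ a % (n : ℤ) then 1 else 0) := by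
  have hn' : (0 : ℤ) < (n : ℤ) := by exact_mod_cast hn
  have hnz : (n : ℤ) ≠ 0 := by omega
  set r := b % (n : ℤ) with hr
  set s := a % (n : ℤ) with hs
  have hr0 : 0 ≤ r := Int.emod_nonneg b hnz
  have hrn : r < n := Int.emod_lt_of_pos b hn'
  have hs0 : 0 ≤ s := Int.emod_nonneg a hnz
  have hsn : s < n := Int.emod_lt_of_pos a hn'
  have hiZ : (i : ℤ) ≤ (n : ℤ) - 1 := by
    have : i ≤ n - 1 := hi
    omega
  have hi0 : (0 : ℤ) ≤ (i : ℤ) := Int.natCast_nonneg i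
  have hb : b = (n : ℤ) * (b / n) + r := (Int.mul_ediv_add_emod b n).symm
  have ha : a = (n : ℤ) * (a / n) + s := (Int.mul_ediv_add_emod a n).symm
  have e1 : (-b + (i : ℤ)) / (n : ℤ) = ((i : ℤ) - r) / n + (-(b / n)) := by
    have : -b + (i : ℤ) = ((i : ℤ) - r) + (n : ℤ) * (-(b / n)) := by
      conv_lhs => rw [hb]
      ring
    rw [this, Int.add_mul_ediv_left _ _ hnz]
  have e2 : (a - b) / (n : ℤ) = (s - r) / n + (a / n - b / n) := by
    have : a - b = (s - r) + (n : ℤ) * (a / n - b / n) := by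
      conv_lhs => rw [ha, hb]
      ring
    rw [this, Int.add_mul_ediv_left _ _ hnz]
  rw [e1, e2,
    small_div_aux n ((i:ℤ) - r) hn' (by omega) (by omega),
    small_div_aux n (s - r) hn' (by omega) (by omega)]
  split_ifs <;> omega
end
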